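/- arXiv:2409.07086 — 6 statements merged into one kernel-verified Lean document; each statement's English description precedes it below -/
import Mathlib

section
/- Let F be a finite field with 2 elements, let W be a Weierstrass curve over F with nonzero discriminant (an elliptic curve), and let L be a field extension of F of degree 2. If the number of points of W over F (including the point at infinity) equals the number of points of the base change of W to L, then that common number of points equals 5. -/
/-- The `(q,m) = (2,2)` row of the genus-one classification: if `W` is an elliptic curve
(a Weierstrass curve with nonzero discriminant) over a field `F` with `2` elements,
`L/F` has degree `2`, and `W` has the same number of points (affine solutions plus the
point at infinity) over `F` and over `L`, then that common number of points is `5`. -/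
theorem genus_one_DS_q2_m2 (F : Type*) [Field F] [Fintype F]
    (hF : Fintype.card F = 2) (W : WeierstrassCurve F) (hΔ : W.Δ ≠ 0)
    (L : Type*) [Field L] [Algebra F L] (hdeg : Module.finrank F L = 2)
    (hN : Nat.card {p : F × F // W.toAffine.Equation p.1 p.2} + 1 =
          Nat.card {p : L × L // (W.baseChange L).toAffine.Equation p.1 p.2} + 1) :
    Nat.card {p : F × F // W.toAffine.Equation p.1 p.2} + 1 = 5 := by
  classical
  have hF2 : ∀ x : F, x = 0 ∨ x = 1 := by
    intro x
    by_contra hx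
    push_neg at hx
    have h3 : ({0, 1, x} : Finset F).card ≤ Fintype.card F := Finset.card_le_univ _
    have hc3 : ({0, 1, x} : Finset F).card = 3 :=
      Finset.card_eq_three.mpr ⟨0, 1, x, zero_ne_one, fun h => hx.1 h.symm,
        fun h => hx.2 h.symm, rfl⟩
    rw [hF] at h3
    omega
  have hch : (2 : F) = 0 := by
    rcases hF2 2 with h | h
    · exact h
    · exact absurd (by linear_combination h) (one_ne_zero (α := F))
  have : FiniteDimensional F L := FiniteDimensional.of_finrank_eq_succ hdeg
  have : Finite L := Module.finite_of_finite F
  have : Fintype L := Fintype.ofFinite L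
  have hcardL : Fintype.card L = 4 := by
    rw [Module.card_eq_pow_finrank (K := F) (V := L), hF, hdeg]
    norm_num
  have hinj : Function.Injective (algebraMap F L) := (algebraMap F L).injective
  have hns : ¬ Function.Surjective (algebraMap F L) := by
    intro hs
    have := Fintype.card_le_of_surjective _ hs
    rw [hF, hcardL] at this
    omega
  obtain ⟨z, hz⟩ := not_forall.mp hns
  have hz' : ∀ a : F, algebraMap F L a ≠ z := fun a ha => hz ⟨a, ha⟩
  have hchL : (2 : L) = 0 := by
    have h2 := congrArg (algebraMap F L) hch
    rwa [map_ofNat, map_zero] at h2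
  have hz0 : z ≠ 0 := fun h => hz' 0 (by rw [map_zero, h])
  have hz1 : z ≠ 1 := fun h => hz' 1 (by rw [map_one, h])
  have hpow : z ^ 4 = z := by
    have h := FiniteField.pow_card z
    rwa [hcardL] at h
  have hzsq : z ^ 2 = z + 1 := by
    have hfac : z * (z - 1) * (z ^ 2 + z + 1) = 0 := by linear_combination hpow
    rcases mul_eq_zero.mp hfac with h | h
    · rcases mul_eq_zero.mp h with h | h
      · exact absurd h hz0
      · exact absurd (by linear_combination h) hz1
    · linear_combination h - (z + 1) * hchL
  have key : ∀ x y : L, (W.baseChange L).toAffine.Equation x y →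
      (∃ a, algebraMap F L a = x) ∧ (∃ b, algebraMap F L b = y) := by
    intro x y hxy
    have hc : Nat.card {p : F × F // W.toAffine.Equation p.1 p.2} =
        Nat.card {p : L × L // (W.baseChange L).toAffine.Equation p.1 p.2} := by omega
    let f : {p : F × F // W.toAffine.Equation p.1 p.2} →
        {p : L × L // (W.baseChange L).toAffine.Equation p.1 p.2} :=
      fun p => ⟨(algebraMap F L p.1.1, algebraMap F L p.1.2),
        (WeierstrassCurve.Affine.map_equation (W := W.toAffine) hinj p.1.1 p.1.2).mpr p.2⟩
    have hfinj : Function.Injective f := by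
      rintro ⟨⟨a, b⟩, hp⟩ ⟨⟨c, d⟩, hq⟩ h
      simp only [f, Subtype.mk.injEq, Subtype.ext_iff, Prod.mk.injEq] at h
      exact Subtype.ext (Prod.ext (hinj h.1) (hinj h.2))
    have hb := (Nat.bijective_iff_injective_and_card f).mpr ⟨hfinj, hc⟩
    obtain ⟨⟨⟨a, b⟩, hab⟩, hfeq⟩ := hb.2 ⟨(x, y), hxy⟩
    simp only [f, Subtype.mk.injEq, Subtype.ext_iff, Prod.mk.injEq] at hfeq
    exact ⟨⟨a, hfeq.1⟩, ⟨b, hfeq.2⟩⟩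
  rcases hF2 W.a₁ with h1 | h1 <;> rcases hF2 W.a₂ with h2 | h2 <;>
    rcases hF2 W.a₃ with h3 | h3 <;> rcases hF2 W.a₄ with h4 | h4 <;>
    rcases hF2 W.a₆ with h6 | h6
  -- case a = (0, 0, 0, 0, 0)
  · exact absurd (by
        unfold WeierstrassCurve.Δ WeierstrassCurve.b₂ WeierstrassCurve.b₄ WeierstrassCurve.b₆ WeierstrassCurve.b₈
        rw [h1, h2, h3, h4, h6]
        linear_combination (0) * hch) hΔ
  -- case a = (0, 0, 0, 0, 1)
  · exact absurd (by
        unfold WeierstrassCurve.Δ WeierstrassCurve.b₂ WeierstrassCurve.b₄ WeierstrassCurve.b₆ WeierstrassCurve.b₈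
        rw [h1, h2, h3, h4, h6]
        linear_combination (-216) * hch) hΔ
  -- case a = (0, 0, 0, 1, 0)
  · exact absurd (by
        unfold WeierstrassCurve.Δ WeierstrassCurve.b₂ WeierstrassCurve.b₄ WeierstrassCurve.b₆ WeierstrassCurve.b₈
        rw [h1, h2, h3, h4, h6]
        linear_combination (-32) * hch) hΔ
  -- case a = (0, 0, 0, 1, 1)
  · exact absurd (by
        unfold WeierstrassCurve.Δ WeierstrassCurve.b₂ WeierstrassCurve.b₄ WeierstrassCurve.b₆ WeierstrassCurve.b₈
        rw [h1, h2, h3, h4, h6]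
        linear_combination (-248) * hch) hΔ
  -- case a = (0, 0, 1, 0, 0)
  · have hw : (W.baseChange L).toAffine.Equation (z) (z) := by
      rw [WeierstrassCurve.Affine.equation_iff]
      simp only [WeierstrassCurve.baseChange, WeierstrassCurve.map_a₁, WeierstrassCurve.map_a₂, WeierstrassCurve.map_a₃, WeierstrassCurve.map_a₄, WeierstrassCurve.map_a₆, h1, h2, h3, h4, h6, map_zero, map_one]
      linear_combination ((-1) * z) * hzsq + (0) * hchL
    obtain ⟨⟨a, ha⟩, -⟩ := key _ _ hw
    exact absurd ha (hz' a)
  -- case a = (0, 0, 1, 0, 1)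
  · have hw : (W.baseChange L).toAffine.Equation (z) (0) := by
      rw [WeierstrassCurve.Affine.equation_iff]
      simp only [WeierstrassCurve.baseChange, WeierstrassCurve.map_a₁, WeierstrassCurve.map_a₂, WeierstrassCurve.map_a₃, WeierstrassCurve.map_a₄, WeierstrassCurve.map_a₆, h1, h2, h3, h4, h6, map_zero, map_one]
      linear_combination ((-1) + (-1) * z) * hzsq + ((-1) + (-1) * z) * hchL
    obtain ⟨⟨a, ha⟩, -⟩ := key _ _ hw
    exact absurd ha (hz' a)
  -- case a = (0, 0, 1, 1, 0)
  · have hall : ∀ p : F × F, W.toAffine.Equation p.1 p.2 := by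
      rintro ⟨x, y⟩
      rw [WeierstrassCurve.Affine.equation_iff]
      rcases hF2 x with hx | hx <;> rcases hF2 y with hy | hy <;>
          rw [hx, hy, h1, h2, h3, h4, h6]
      · linear_combination (0) * hch
      · linear_combination (1) * hch
      · linear_combination (-1) * hch
      · linear_combination (0) * hch
    rw [Nat.card_congr (Equiv.subtypeUnivEquiv hall), Nat.card_prod,
      Nat.card_eq_fintype_card, hF]
  -- case a = (0, 0, 1, 1, 1)
  · have hw : (W.baseChange L).toAffine.Equation (0) (z) := by
      rw [WeierstrassCurve.Affine.equation_iff]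
      simp only [WeierstrassCurve.baseChange, WeierstrassCurve.map_a₁, WeierstrassCurve.map_a₂, WeierstrassCurve.map_a₃, WeierstrassCurve.map_a₄, WeierstrassCurve.map_a₆, h1, h2, h3, h4, h6, map_zero, map_one]
      linear_combination ((1)) * hzsq + ((1) * z) * hchL
    obtain ⟨-, ⟨b, hb⟩⟩ := key _ _ hw
    exact absurd hb (hz' b)
  -- case a = (0, 1, 0, 0, 0)
  · exact absurd (by
        unfold WeierstrassCurve.Δ WeierstrassCurve.b₂ WeierstrassCurve.b₄ WeierstrassCurve.b₆ WeierstrassCurve.b₈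
        rw [h1, h2, h3, h4, h6]
        linear_combination (0) * hch) hΔ
  -- case a = (0, 1, 0, 0, 1)
  · exact absurd (by
        unfold WeierstrassCurve.Δ WeierstrassCurve.b₂ WeierstrassCurve.b₄ WeierstrassCurve.b₆ WeierstrassCurve.b₈
        rw [h1, h2, h3, h4, h6]
        linear_combination (-248) * hch) hΔ
  -- case a = (0, 1, 0, 1, 0)
  · exact absurd (by
        unfold WeierstrassCurve.Δ WeierstrassCurve.b₂ WeierstrassCurve.b₄ WeierstrassCurve.b₆ WeierstrassCurve.b₈
        rw [h1, h2, h3, h4, h6]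
        linear_combination (-24) * hch) hΔ
  -- case a = (0, 1, 0, 1, 1)
  · exact absurd (by
        unfold WeierstrassCurve.Δ WeierstrassCurve.b₂ WeierstrassCurve.b₄ WeierstrassCurve.b₆ WeierstrassCurve.b₈
        rw [h1, h2, h3, h4, h6]
        linear_combination (-128) * hch) hΔ
  -- case a = (0, 1, 1, 0, 0)
  · have hall : ∀ p : F × F, W.toAffine.Equation p.1 p.2 := by
      rintro ⟨x, y⟩
      rw [WeierstrassCurve.Affine.equation_iff]
      rcases hF2 x with hx | hx <;> rcases hF2 y with hy | hy <;>
          rw [hx, hy, h1, h2, h3, h4, h6]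
      · linear_combination (0) * hch
      · linear_combination (1) * hch
      · linear_combination (-1) * hch
      · linear_combination (0) * hch
    rw [Nat.card_congr (Equiv.subtypeUnivEquiv hall), Nat.card_prod,
      Nat.card_eq_fintype_card, hF]
  -- case a = (0, 1, 1, 0, 1)
  · have hw : (W.baseChange L).toAffine.Equation (0) (z) := by
      rw [WeierstrassCurve.Affine.equation_iff]
      simp only [WeierstrassCurve.baseChange, WeierstrassCurve.map_a₁, WeierstrassCurve.map_a₂, WeierstrassCurve.map_a₃, WeierstrassCurve.map_a₄, WeierstrassCurve.map_a₆, h1, h2, h3, h4, h6, map_zero, map_one]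
      linear_combination ((1)) * hzsq + ((1) * z) * hchL
    obtain ⟨-, ⟨b, hb⟩⟩ := key _ _ hw
    exact absurd hb (hz' b)
  -- case a = (0, 1, 1, 1, 0)
  · have hw : (W.baseChange L).toAffine.Equation (z) (0) := by
      rw [WeierstrassCurve.Affine.equation_iff]
      simp only [WeierstrassCurve.baseChange, WeierstrassCurve.map_a₁, WeierstrassCurve.map_a₂, WeierstrassCurve.map_a₃, WeierstrassCurve.map_a₄, WeierstrassCurve.map_a₆, h1, h2, h3, h4, h6, map_zero, map_one]
      linear_combination ((-2) + (-1) * z) * hzsq + ((-1) + (-2) * z) * hchL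
    obtain ⟨⟨a, ha⟩, -⟩ := key _ _ hw
    exact absurd ha (hz' a)
  -- case a = (0, 1, 1, 1, 1)
  · have hw : (W.baseChange L).toAffine.Equation (z) (z) := by
      rw [WeierstrassCurve.Affine.equation_iff]
      simp only [WeierstrassCurve.baseChange, WeierstrassCurve.map_a₁, WeierstrassCurve.map_a₂, WeierstrassCurve.map_a₃, WeierstrassCurve.map_a₄, WeierstrassCurve.map_a₆, h1, h2, h3, h4, h6, map_zero, map_one]
      linear_combination ((-1) + (-1) * z) * hzsq + ((-1) + (-1) * z) * hchL
    obtain ⟨⟨a, ha⟩, -⟩ := key _ _ hw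
    exact absurd ha (hz' a)
  -- case a = (1, 0, 0, 0, 0)
  · exact absurd (by
        unfold WeierstrassCurve.Δ WeierstrassCurve.b₂ WeierstrassCurve.b₄ WeierstrassCurve.b₆ WeierstrassCurve.b₈
        rw [h1, h2, h3, h4, h6]
        linear_combination (0) * hch) hΔ
  -- case a = (1, 0, 0, 0, 1)
  · have hw : (W.baseChange L).toAffine.Equation (z) (0) := by
      rw [WeierstrassCurve.Affine.equation_iff]
      simp only [WeierstrassCurve.baseChange, WeierstrassCurve.map_a₁, WeierstrassCurve.map_a₂, WeierstrassCurve.map_a₃, WeierstrassCurve.map_a₄, WeierstrassCurve.map_a₆, h1, h2, h3, h4, h6, map_zero, map_one]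
      linear_combination ((-1) + (-1) * z) * hzsq + ((-1) + (-1) * z) * hchL
    obtain ⟨⟨a, ha⟩, -⟩ := key _ _ hw
    exact absurd ha (hz' a)
  -- case a = (1, 0, 0, 1, 0)
  · have hw : (W.baseChange L).toAffine.Equation (z) (1) := by
      rw [WeierstrassCurve.Affine.equation_iff]
      simp only [WeierstrassCurve.baseChange, WeierstrassCurve.map_a₁, WeierstrassCurve.map_a₂, WeierstrassCurve.map_a₃, WeierstrassCurve.map_a₄, WeierstrassCurve.map_a₆, h1, h2, h3, h4, h6, map_zero, map_one]
      linear_combination ((-1) + (-1) * z) * hzsq + ((-1) * z) * hchL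
    obtain ⟨⟨a, ha⟩, -⟩ := key _ _ hw
    exact absurd ha (hz' a)
  -- case a = (1, 0, 0, 1, 1)
  · exact absurd (by
        unfold WeierstrassCurve.Δ WeierstrassCurve.b₂ WeierstrassCurve.b₄ WeierstrassCurve.b₆ WeierstrassCurve.b₈
        rw [h1, h2, h3, h4, h6]
        linear_combination (-212) * hch) hΔ
  -- case a = (1, 0, 1, 0, 0)
  · exact absurd (by
        unfold WeierstrassCurve.Δ WeierstrassCurve.b₂ WeierstrassCurve.b₄ WeierstrassCurve.b₆ WeierstrassCurve.b₈
        rw [h1, h2, h3, h4, h6]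
        linear_combination (-13) * hch) hΔ
  -- case a = (1, 0, 1, 0, 1)
  · have hw : (W.baseChange L).toAffine.Equation (z) (0) := by
      rw [WeierstrassCurve.Affine.equation_iff]
      simp only [WeierstrassCurve.baseChange, WeierstrassCurve.map_a₁, WeierstrassCurve.map_a₂, WeierstrassCurve.map_a₃, WeierstrassCurve.map_a₄, WeierstrassCurve.map_a₆, h1, h2, h3, h4, h6, map_zero, map_one]
      linear_combination ((-1) + (-1) * z) * hzsq + ((-1) + (-1) * z) * hchL
    obtain ⟨⟨a, ha⟩, -⟩ := key _ _ hw
    exact absurd ha (hz' a)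
  -- case a = (1, 0, 1, 1, 0)
  · exact absurd (by
        unfold WeierstrassCurve.Δ WeierstrassCurve.b₂ WeierstrassCurve.b₄ WeierstrassCurve.b₆ WeierstrassCurve.b₈
        rw [h1, h2, h3, h4, h6]
        linear_combination (-107) * hch) hΔ
  -- case a = (1, 0, 1, 1, 1)
  · have hw : (W.baseChange L).toAffine.Equation (z) (1) := by
      rw [WeierstrassCurve.Affine.equation_iff]
      simp only [WeierstrassCurve.baseChange, WeierstrassCurve.map_a₁, WeierstrassCurve.map_a₂, WeierstrassCurve.map_a₃, WeierstrassCurve.map_a₄, WeierstrassCurve.map_a₆, h1, h2, h3, h4, h6, map_zero, map_one]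
      linear_combination ((-1) + (-1) * z) * hzsq + ((-1) * z) * hchL
    obtain ⟨⟨a, ha⟩, -⟩ := key _ _ hw
    exact absurd ha (hz' a)
  -- case a = (1, 1, 0, 0, 0)
  · exact absurd (by
        unfold WeierstrassCurve.Δ WeierstrassCurve.b₂ WeierstrassCurve.b₄ WeierstrassCurve.b₆ WeierstrassCurve.b₈
        rw [h1, h2, h3, h4, h6]
        linear_combination (0) * hch) hΔ
  -- case a = (1, 1, 0, 0, 1)
  · have hw : (W.baseChange L).toAffine.Equation (z) (1) := by
      rw [WeierstrassCurve.Affine.equation_iff]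
      simp only [WeierstrassCurve.baseChange, WeierstrassCurve.map_a₁, WeierstrassCurve.map_a₂, WeierstrassCurve.map_a₃, WeierstrassCurve.map_a₄, WeierstrassCurve.map_a₆, h1, h2, h3, h4, h6, map_zero, map_one]
      linear_combination ((-2) + (-1) * z) * hzsq + ((-1) + (-1) * z) * hchL
    obtain ⟨⟨a, ha⟩, -⟩ := key _ _ hw
    exact absurd ha (hz' a)
  -- case a = (1, 1, 0, 1, 0)
  · have hw : (W.baseChange L).toAffine.Equation (z) (0) := by
      rw [WeierstrassCurve.Affine.equation_iff]
      simp only [WeierstrassCurve.baseChange, WeierstrassCurve.map_a₁, WeierstrassCurve.map_a₂, WeierstrassCurve.map_a₃, WeierstrassCurve.map_a₄, WeierstrassCurve.map_a₆, h1, h2, h3, h4, h6, map_zero, map_one]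
      linear_combination ((-2) + (-1) * z) * hzsq + ((-1) + (-2) * z) * hchL
    obtain ⟨⟨a, ha⟩, -⟩ := key _ _ hw
    exact absurd ha (hz' a)
  -- case a = (1, 1, 0, 1, 1)
  · exact absurd (by
        unfold WeierstrassCurve.Δ WeierstrassCurve.b₂ WeierstrassCurve.b₄ WeierstrassCurve.b₆ WeierstrassCurve.b₈
        rw [h1, h2, h3, h4, h6]
        linear_combination (-118) * hch) hΔ
  -- case a = (1, 1, 1, 0, 0)
  · have hw : (W.baseChange L).toAffine.Equation (z) (1) := by
      rw [WeierstrassCurve.Affine.equation_iff]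
      simp only [WeierstrassCurve.baseChange, WeierstrassCurve.map_a₁, WeierstrassCurve.map_a₂, WeierstrassCurve.map_a₃, WeierstrassCurve.map_a₄, WeierstrassCurve.map_a₆, h1, h2, h3, h4, h6, map_zero, map_one]
      linear_combination ((-2) + (-1) * z) * hzsq + ((-1) * z) * hchL
    obtain ⟨⟨a, ha⟩, -⟩ := key _ _ hw
    exact absurd ha (hz' a)
  -- case a = (1, 1, 1, 0, 1)
  · exact absurd (by
        unfold WeierstrassCurve.Δ WeierstrassCurve.b₂ WeierstrassCurve.b₄ WeierstrassCurve.b₆ WeierstrassCurve.b₈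
        rw [h1, h2, h3, h4, h6]
        linear_combination (-304) * hch) hΔ
  -- case a = (1, 1, 1, 1, 0)
  · have hw : (W.baseChange L).toAffine.Equation (z) (0) := by
      rw [WeierstrassCurve.Affine.equation_iff]
      simp only [WeierstrassCurve.baseChange, WeierstrassCurve.map_a₁, WeierstrassCurve.map_a₂, WeierstrassCurve.map_a₃, WeierstrassCurve.map_a₄, WeierstrassCurve.map_a₆, h1, h2, h3, h4, h6, map_zero, map_one]
      linear_combination ((-2) + (-1) * z) * hzsq + ((-1) + (-2) * z) * hchL
    obtain ⟨⟨a, ha⟩, -⟩ := key _ _ hw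
    exact absurd ha (hz' a)
  -- case a = (1, 1, 1, 1, 1)
  · exact absurd (by
        unfold WeierstrassCurve.Δ WeierstrassCurve.b₂ WeierstrassCurve.b₄ WeierstrassCurve.b₆ WeierstrassCurve.b₈
        rw [h1, h2, h3, h4, h6]
        linear_combination (-158) * hch) hΔ
end

section
/- Let q₀ be a prime power and let F be a finite field with q₀² elements. Then the number of points [x : y : z] in the projective plane ℙ²(F) satisfying x^{q₀+1} + y^{q₀+1} + z^{q₀+1} = 0 equals q₀³ + 1. -/
open Finset Polynomial

private lemma filter_root_card_le {F : Type*} [Field F] [Fintype F] [DecidableEq F]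
    (P : Polynomial F) (hP : P ≠ 0) :
    (Finset.univ.filter fun x : F => P.eval x = 0).card ≤ P.natDegree := by
  have hsub : (Finset.univ.filter fun x : F => P.eval x = 0) ⊆ P.roots.toFinset := by
    intro x hx
    simp only [Finset.mem_filter] at hx
    rw [Multiset.mem_toFinset, Polynomial.mem_roots hP]
    exact hx.2
  calc (Finset.univ.filter fun x : F => P.eval x = 0).card
      ≤ P.roots.toFinset.card := Finset.card_le_card hsub
    _ ≤ Multiset.card P.roots := Multiset.toFinset_card_le _
    _ ≤ P.natDegree := Polynomial.card_roots' P

private lemma pow_eq_card_le' {F : Type*} [Field F] [Fintype F] [DecidableEq F]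
    (n : ℕ) (hn : 0 < n) (c : F) :
    (Finset.univ.filter fun x : F => x ^ n = c).card ≤ n := by
  have heq : (Finset.univ.filter fun x : F => x ^ n = c)
      = (Finset.univ.filter fun x : F => (X ^ n - C c : Polynomial F).eval x = 0) := by
    apply Finset.filter_congr
    intro x _
    simp [sub_eq_zero]
  rw [heq]
  simpa [natDegree_X_pow_sub_C] using
    filter_root_card_le (X ^ n - C c) (X_pow_sub_C_ne_zero hn c)

private lemma fixed_card_le' {F : Type*} [Field F] [Fintype F] [DecidableEq F]
    (q₀ : ℕ) (hq : 2 ≤ q₀) :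
    (Finset.univ.filter fun t : F => t ^ q₀ = t).card ≤ q₀ := by
  have hdeg : (X ^ q₀ - X : Polynomial F).natDegree = q₀ := by
    rw [natDegree_sub_eq_left_of_natDegree_lt] <;>
      simp [natDegree_X_pow] <;> omega
  have hne : (X ^ q₀ - X : Polynomial F) ≠ 0 := by
    intro h
    rw [h] at hdeg
    simp at hdeg
    omega
  have heq : (Finset.univ.filter fun t : F => t ^ q₀ = t)
      = (Finset.univ.filter fun t : F => (X ^ q₀ - X : Polynomial F).eval t = 0) := by
    apply Finset.filter_congr
    intro x _
    simp [sub_eq_zero]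
  have h := filter_root_card_le (X ^ q₀ - X) hne
  rw [hdeg] at h
  rw [heq]
  exact h

private lemma pow_fiber {F : Type*} [Field F] [Fintype F] [DecidableEq F]
    (q₀ : ℕ) (hq : 2 ≤ q₀) (hF : Fintype.card F = q₀ ^ 2) :
    ∀ t : F, t ≠ 0 → t ^ q₀ = t →
      (Finset.univ.filter fun x : F => x ^ (q₀ + 1) = t).card = q₀ + 1 := by
  set k := (Finset.univ.filter fun x : F => x ^ (q₀ + 1) = (1 : F)).card with hkdef
  have hfib : ∀ x₀ : F, x₀ ≠ 0 →
      (Finset.univ.filter fun x : F => x ^ (q₀ + 1) = x₀ ^ (q₀ + 1)).card = k := by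
    intro x₀ h0
    rw [hkdef]
    apply Finset.card_bij' (fun x _ => x / x₀) (fun y _ => y * x₀)
    · intro a ha
      simp only [Finset.mem_filter, Finset.mem_univ, true_and] at ha ⊢
      rw [div_pow, ha, div_self (pow_ne_zero _ h0)]
    · intro y hy
      simp only [Finset.mem_filter, Finset.mem_univ, true_and] at hy ⊢
      rw [mul_pow, hy, one_mul]
    · intro a _; exact div_mul_cancel₀ a h0
    · intro y _; exact mul_div_cancel_right₀ y h0
  have hpowK : ∀ x : F, (x ^ (q₀ + 1)) ^ q₀ = x ^ (q₀ + 1) := by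
    intro x
    rw [← pow_mul]
    have h1 : (q₀ + 1) * q₀ = q₀ ^ 2 + q₀ := by ring
    rw [h1, pow_add, ← hF, FiniteField.pow_card]
    rw [pow_succ, mul_comm]
  set R := (Finset.univ.filter fun x : F => ¬ x = 0).image (· ^ (q₀ + 1)) with hRdef
  have hmemR : ∀ t ∈ R, ∃ x₀ : F, x₀ ≠ 0 ∧ x₀ ^ (q₀ + 1) = t := by
    intro t ht
    rw [hRdef, Finset.mem_image] at ht
    obtain ⟨x, hx, hxt⟩ := ht
    simp only [Finset.mem_filter, Finset.mem_univ, true_and] at hx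
    exact ⟨x, hx, hxt⟩
  have hRfib : ∀ t ∈ R, (Finset.univ.filter fun x : F => x ^ (q₀ + 1) = t).card = k := by
    intro t ht
    obtain ⟨x₀, h0, rfl⟩ := hmemR t ht
    exact hfib x₀ h0
  have hpart : (Finset.univ.filter fun x : F => ¬ x = 0).card = R.card * k := by
    rw [Finset.card_eq_sum_card_fiberwise
      (f := fun x : F => x ^ (q₀ + 1)) (t := R)
      (fun x hx => by
        rw [hRdef]
        exact Finset.mem_image_of_mem _ hx)]
    rw [Finset.sum_congr rfl (fun t ht => ?_), Finset.sum_const, smul_eq_mul]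
    have heq : ((Finset.univ.filter fun x : F => ¬ x = 0).filter
          fun x => x ^ (q₀ + 1) = t)
        = Finset.univ.filter fun x : F => x ^ (q₀ + 1) = t := by
      ext x
      simp only [Finset.mem_filter, Finset.mem_univ, true_and]
      constructor
      · rintro ⟨_, h⟩; exact h
      · intro h
        refine ⟨?_, h⟩
        rintro rfl
        obtain ⟨x₀, h0, hxt⟩ := hmemR t ht
        rw [zero_pow (by omega : q₀ + 1 ≠ 0)] at h
        exact pow_ne_zero _ h0 (hxt.trans h.symm)
    rw [heq]
    exact hRfib t ht
  have hcard0 : (Finset.univ.filter fun x : F => ¬ x = 0).card + 1 = q₀ ^ 2 := by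
    have heq : (Finset.univ.filter fun x : F => ¬ x = 0) = Finset.univ.erase 0 := by
      ext x; simp [Finset.mem_erase]
    rw [heq, Finset.card_erase_add_one (Finset.mem_univ 0), Finset.card_univ, hF]
  have hk_le : k ≤ q₀ + 1 := pow_eq_card_le' (q₀ + 1) (by omega) 1
  have hRsub : R ⊆ (Finset.univ.filter fun t : F => t ^ q₀ = t).erase 0 := by
    intro t ht
    obtain ⟨x₀, h0, rfl⟩ := hmemR t ht
    rw [Finset.mem_erase]
    exact ⟨pow_ne_zero _ h0, by
      simp only [Finset.mem_filter, Finset.mem_univ, true_and]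
      exact hpowK x₀⟩
  have hKf0 : (0 : F) ∈ Finset.univ.filter fun t : F => t ^ q₀ = t := by
    simp [zero_pow (by omega : q₀ ≠ 0)]
  have herase : ((Finset.univ.filter fun t : F => t ^ q₀ = t).erase 0).card + 1
      = (Finset.univ.filter fun t : F => t ^ q₀ = t).card :=
    Finset.card_erase_add_one hKf0
  have hKle := fixed_card_le' (F := F) q₀ hq
  have hR_le : R.card + 1 ≤ q₀ := by
    have h1 := Finset.card_le_card hRsub
    omega
  have hmul : R.card * k + 1 = q₀ ^ 2 := by omega
  have hk2 : k = q₀ + 1 := by nlinarith [hmul, hR_le, hk_le, hq]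
  have hReq : R = (Finset.univ.filter fun t : F => t ^ q₀ = t).erase 0 := by
    apply Finset.eq_of_subset_of_card_le hRsub
    have h1 := Finset.card_le_card hRsub
    have hacard : R.card + 1 = q₀ := by nlinarith [hmul, hR_le, hk_le, hq, hk2]
    omega
  intro t ht0 ht
  have htR : t ∈ R := by
    rw [hReq, Finset.mem_erase]
    refine ⟨ht0, ?_⟩
    simp only [Finset.mem_filter, Finset.mem_univ, true_and]
    exact ht
  rw [hRfib t htR, hk2]

private def fin3Equiv (α : Type*) : (Fin 3 → α) ≃ α × α × α where
  toFun v := (v 0, v 1, v 2)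
  invFun p := ![p.1, p.2.1, p.2.2]
  left_inv v := by
    funext i
    fin_cases i <;> rfl
  right_inv p := rfl

private lemma natCard_fin3_subtype {α : Type*} [Zero α] (P : α → α → α → Prop) :
    Nat.card {v : Fin 3 → α // ¬ v = 0 ∧ P (v 0) (v 1) (v 2)}
      = Nat.card {tr : α × α × α // ¬ tr = 0 ∧ P tr.1 tr.2.1 tr.2.2} := by
  apply Nat.card_congr
  apply Equiv.subtypeEquiv (fin3Equiv α)
  intro v
  have hz : v = 0 ↔ fin3Equiv α v = 0 := by
    constructor
    · rintro rfl; rfl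
    · intro h
      have h' : v 0 = 0 ∧ v 1 = 0 ∧ v 2 = 0 := by
        have h2 := Prod.ext_iff.mp h
        have h3 := Prod.ext_iff.mp h2.2
        exact ⟨h2.1, h3.1, h3.2⟩
      funext i
      fin_cases i
      · simpa using h'.1
      · simpa using h'.2.1
      · simpa using h'.2.2
  rw [hz]
  rfl

set_option maxHeartbeats 2000000 in
/-- The Hermitian curve: over a finite field `F` with `q₀²` elements (`q₀` a prime
power), the number of points `[x : y : z]` of `ℙ²(F)` with
`x^{q₀+1} + y^{q₀+1} + z^{q₀+1} = 0` equals `q₀³ + 1`. -/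
theorem hermitian_curve_count (q₀ : ℕ) (hq₀ : ∃ p n : ℕ, p.Prime ∧ 0 < n ∧ q₀ = p ^ n)
    (F : Type*) [Field F] [Fintype F] (hF : Fintype.card F = q₀ ^ 2) :
    Nat.card {P : Projectivization F (Fin 3 → F) //
        (P.rep 0) ^ (q₀ + 1) + (P.rep 1) ^ (q₀ + 1) + (P.rep 2) ^ (q₀ + 1) = 0} =
      q₀ ^ 3 + 1 := by
  classical
  obtain ⟨p, n, hp, hn, hq0⟩ := hq₀
  haveI : Fact p.Prime := ⟨hp⟩
  have hq2 : 2 ≤ q₀ := by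
    rw [hq0]
    calc 2 ≤ p := hp.two_le
    _ = p ^ 1 := (pow_one p).symm
    _ ≤ p ^ n := Nat.pow_le_pow_right (Nat.le_of_lt hp.one_lt) hn
  -- characteristic
  haveI hcharp : CharP F p := by
    haveI : CharP F (ringChar F) := ringChar.charP F
    obtain ⟨n', hc_prime, hcard⟩ := FiniteField.card F (ringChar F)
    have hdvd : p ∣ (ringChar F) ^ (n' : ℕ) := by
      rw [← hcard, hF, hq0, ← pow_mul]
      exact dvd_pow_self p (by omega)
    have hpc : p = ringChar F :=
      (Nat.prime_dvd_prime_iff_eq hp hc_prime).mp (hp.dvd_of_dvd_pow hdvd)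
    rw [hpc]
    infer_instance
  have hq₀add : ∀ x y : F, (x + y) ^ q₀ = x ^ q₀ + y ^ q₀ := by
    intro x y
    simp only [hq0, ← iterateFrobenius_def (R := F) (p := p) (n := n), map_add]
  have hq₀neg : ∀ x : F, (-x : F) ^ q₀ = -(x ^ q₀) := by
    intro x
    simp only [hq0, ← iterateFrobenius_def (R := F) (p := p) (n := n), map_neg]
  have hm0 : q₀ + 1 ≠ 0 := by omega
  have hNK : ∀ x : F, (x ^ (q₀ + 1)) ^ q₀ = x ^ (q₀ + 1) := by
    intro x
    rw [← pow_mul]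
    have h1 : (q₀ + 1) * q₀ = q₀ ^ 2 + q₀ := by ring
    rw [h1, pow_add, ← hF, FiniteField.pow_card]
    rw [pow_succ, mul_comm]
  have nf0 : (Finset.univ.filter fun x : F => x ^ (q₀ + 1) = 0).card = 1 := by
    have heq : (Finset.univ.filter fun x : F => x ^ (q₀ + 1) = 0) = {0} := by
      ext x
      simp [pow_eq_zero_iff hm0]
    rw [heq, Finset.card_singleton]
  have hval : ∀ s : F, s ^ q₀ = s →
      (Finset.univ.filter fun x : F => x ^ (q₀ + 1) = -s).card
        = if s = 0 then 1 else q₀ + 1 := by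
    intro s hs
    by_cases h0 : s = 0
    · rw [if_pos h0, h0]
      simpa using nf0
    · rw [if_neg h0]
      exact pow_fiber q₀ hq2 hF (-s) (neg_ne_zero.mpr h0) (by rw [hq₀neg, hs])
  set E := (Finset.univ.filter fun x : F => ¬ x = 0).card with hEdef
  have hE : E + 1 = q₀ ^ 2 := by
    have heq : (Finset.univ.filter fun x : F => ¬ x = 0) = Finset.univ.erase 0 := by
      ext x; simp [Finset.mem_erase]
    rw [hEdef, heq, Finset.card_erase_add_one (Finset.mem_univ 0), Finset.card_univ, hF]
  set S2 := (Finset.univ.filter fun pr : F × F =>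
      pr.1 ^ (q₀ + 1) + pr.2 ^ (q₀ + 1) = 0).card with hS2def
  have hinner2 : ∀ x : F,
      (∑ y : F, if x ^ (q₀ + 1) + y ^ (q₀ + 1) = 0 then 1 else 0)
        = if x = 0 then 1 else q₀ + 1 := by
    intro x
    have hiff : ∀ y : F, (x ^ (q₀ + 1) + y ^ (q₀ + 1) = 0)
        ↔ (y ^ (q₀ + 1) = -(x ^ (q₀ + 1))) := by
      intro y
      rw [add_comm, add_eq_zero_iff_eq_neg]
    simp_rw [hiff]
    rw [Finset.sum_boole]
    push_cast
    rw [hval (x ^ (q₀ + 1)) (hNK x)]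
    by_cases hx : x = 0
    · simp [hx, zero_pow hm0]
    · simp [hx, pow_eq_zero_iff hm0]
  have hS2 : S2 = 1 + E * (q₀ + 1) := by
    have hstep : S2 = ∑ x : F, ∑ y : F,
        if x ^ (q₀ + 1) + y ^ (q₀ + 1) = 0 then 1 else 0 := by
      rw [hS2def, Finset.card_filter]
      exact Fintype.sum_prod_type _
    rw [hstep, Finset.sum_congr rfl fun x _ => hinner2 x]
    rw [Finset.sum_ite, Finset.sum_const, Finset.sum_const, smul_eq_mul, smul_eq_mul]
    have h0f : (Finset.univ.filter fun x : F => x = 0) = {0} := by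
      ext x; simp
    rw [h0f, Finset.card_singleton, one_mul, hEdef]
  set D := (Finset.univ.filter fun pr : F × F =>
      ¬ (pr.1 ^ (q₀ + 1) + pr.2 ^ (q₀ + 1) = 0)).card with hDdef
  have hD : S2 + D = q₀ ^ 2 * q₀ ^ 2 := by
    rw [hS2def, hDdef, Finset.card_filter_add_card_filter_not]
    rw [Finset.card_univ, Fintype.card_prod, hF]
  set S3 := (Finset.univ.filter fun tr : F × F × F =>
      tr.1 ^ (q₀ + 1) + tr.2.1 ^ (q₀ + 1) + tr.2.2 ^ (q₀ + 1) = 0).card with hS3def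
  have hS3 : S3 = S2 + D * (q₀ + 1) := by
    have hstep : S3 = ∑ x : F, ∑ y : F, ∑ z : F,
        if x ^ (q₀ + 1) + y ^ (q₀ + 1) + z ^ (q₀ + 1) = 0 then 1 else 0 := by
      rw [hS3def, Finset.card_filter]
      refine (Fintype.sum_prod_type _).trans ?_
      exact Finset.sum_congr rfl fun x _ => Fintype.sum_prod_type _
    have hinner3 : ∀ x y : F,
        (∑ z : F, if x ^ (q₀ + 1) + y ^ (q₀ + 1) + z ^ (q₀ + 1) = 0 then 1 else 0)
          = if x ^ (q₀ + 1) + y ^ (q₀ + 1) = 0 then 1 else q₀ + 1 := by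
      intro x y
      have hiff : ∀ z : F, (x ^ (q₀ + 1) + y ^ (q₀ + 1) + z ^ (q₀ + 1) = 0)
          ↔ (z ^ (q₀ + 1) = -(x ^ (q₀ + 1) + y ^ (q₀ + 1))) := by
        intro z
        rw [add_comm (x ^ (q₀ + 1) + y ^ (q₀ + 1)) (z ^ (q₀ + 1)),
          add_eq_zero_iff_eq_neg]
      simp_rw [hiff]
      rw [Finset.sum_boole]
      push_cast
      exact hval _ (by rw [hq₀add, hNK, hNK])
    rw [hstep, Finset.sum_congr rfl fun x _ =>
      Finset.sum_congr rfl fun y _ => hinner3 x y]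
    have hcollapse : (∑ x : F, ∑ y : F,
        if x ^ (q₀ + 1) + y ^ (q₀ + 1) = 0 then 1 else q₀ + 1)
        = ∑ pr : F × F,
            if pr.1 ^ (q₀ + 1) + pr.2 ^ (q₀ + 1) = 0 then 1 else q₀ + 1 :=
      (Fintype.sum_prod_type
        (fun pr : F × F =>
          if pr.1 ^ (q₀ + 1) + pr.2 ^ (q₀ + 1) = 0 then 1 else q₀ + 1)).symm
    rw [hcollapse, Finset.sum_ite, Finset.sum_const, Finset.sum_const,
      smul_eq_mul, smul_eq_mul, mul_one, hS2def, hDdef]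
  -- nonzero affine solutions over triples
  set CA := (Finset.univ.filter fun tr : F × F × F =>
      ¬ tr = 0 ∧ tr.1 ^ (q₀ + 1) + tr.2.1 ^ (q₀ + 1) + tr.2.2 ^ (q₀ + 1) = 0).card
    with hCAdef
  have h0P : (0 : F × F × F) ∈ Finset.univ.filter (fun tr : F × F × F =>
      tr.1 ^ (q₀ + 1) + tr.2.1 ^ (q₀ + 1) + tr.2.2 ^ (q₀ + 1) = 0) := by
    simp [zero_pow hm0]
  have hCA : CA + 1 = S3 := by
    have hsets : (Finset.univ.filter fun tr : F × F × F =>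
        ¬ tr = 0 ∧ tr.1 ^ (q₀ + 1) + tr.2.1 ^ (q₀ + 1) + tr.2.2 ^ (q₀ + 1) = 0)
        = (Finset.univ.filter (fun tr : F × F × F =>
            tr.1 ^ (q₀ + 1) + tr.2.1 ^ (q₀ + 1) + tr.2.2 ^ (q₀ + 1) = 0)).erase 0 := by
      ext tr
      simp only [Finset.mem_filter, Finset.mem_erase, Finset.mem_univ, true_and, ne_eq]
      try tauto
    rw [hCAdef, hsets, Finset.card_erase_add_one h0P, hS3def]
  -- homogeneity of the defining equation
  have hcond_smul : ∀ (c : F), c ≠ 0 → ∀ v : Fin 3 → F,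
      ((c • v) 0 ^ (q₀ + 1) + (c • v) 1 ^ (q₀ + 1) + (c • v) 2 ^ (q₀ + 1) = 0
        ↔ v 0 ^ (q₀ + 1) + v 1 ^ (q₀ + 1) + v 2 ^ (q₀ + 1) = 0) := by
    intro c hc v
    have hfac : (c • v) 0 ^ (q₀ + 1) + (c • v) 1 ^ (q₀ + 1) + (c • v) 2 ^ (q₀ + 1)
        = c ^ (q₀ + 1) * (v 0 ^ (q₀ + 1) + v 1 ^ (q₀ + 1) + v 2 ^ (q₀ + 1)) := by
      simp only [Pi.smul_apply, smul_eq_mul, mul_pow]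
      ring
    rw [hfac, mul_eq_zero]
    simp [pow_eq_zero_iff hm0, hc]
  -- the scaling map
  let toA : {P : Projectivization F (Fin 3 → F) //
        (P.rep 0) ^ (q₀ + 1) + (P.rep 1) ^ (q₀ + 1) + (P.rep 2) ^ (q₀ + 1) = 0}
      × {c : F // ¬ c = 0} →
      {v : Fin 3 → F // ¬ v = 0 ∧
        v 0 ^ (q₀ + 1) + v 1 ^ (q₀ + 1) + v 2 ^ (q₀ + 1) = 0} :=
    fun Pc => ⟨(Pc.2 : F) • Pc.1.1.rep,
      fun h => (Pc.1.1.rep_nonzero) ((smul_eq_zero.mp h).resolve_left Pc.2.2),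
      (hcond_smul _ Pc.2.2 _).mpr Pc.1.2⟩
  have hbij : Function.Bijective toA := by
    constructor
    · rintro ⟨⟨P, hP⟩, ⟨c, hc⟩⟩ ⟨⟨Q, hQ⟩, ⟨d, hd⟩⟩ h
      have h' : c • P.rep = d • Q.rep := congrArg Subtype.val h
      have hPQ : P = Q := by
        conv_lhs => rw [← P.mk_rep]
        conv_rhs => rw [← Q.mk_rep]
        rw [Projectivization.mk_eq_mk_iff']
        refine ⟨c⁻¹ * d, ?_⟩
        rw [mul_smul, ← h', ← mul_smul, inv_mul_cancel₀ hc, one_smul]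
      subst hPQ
      have hcd : c = d := by
        by_contra hne
        have hz : (c - d) • P.rep = 0 := by rw [sub_smul, h', sub_self]
        rcases smul_eq_zero.mp hz with h1 | h2
        · exact hne (by rwa [sub_eq_zero] at h1)
        · exact P.rep_nonzero h2
      subst hcd
      rfl
    · rintro ⟨v, hv0, hvc⟩
      have hv0' : v ≠ 0 := hv0
      obtain ⟨a, ha⟩ := Projectivization.exists_smul_eq_mk_rep F v hv0'
      have harep : ((a : F) • v) = (Projectivization.mk F v hv0').rep := by
        rw [← ha, Units.smul_def]
      refine ⟨⟨⟨Projectivization.mk F v hv0', ?_⟩, ⟨(a : F)⁻¹, ?_⟩⟩, ?_⟩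
      · rw [← harep]
        exact (hcond_smul (a : F) (Units.ne_zero a) v).mpr hvc
      · exact fun h => (inv_ne_zero (Units.ne_zero a)) h
      · apply Subtype.ext
        show ((a : F)⁻¹) • (Projectivization.mk F v hv0').rep = v
        rw [← harep, ← mul_smul, inv_mul_cancel₀ (Units.ne_zero a), one_smul]
  have h1 := Nat.card_congr (Equiv.ofBijective toA hbij)
  rw [Nat.card_prod] at h1
  have hC : Nat.card {c : F // ¬ c = 0} = E := by
    simp only [Nat.card_eq_fintype_card, Fintype.card_subtype]
    try rw [hEdef]
  rw [hC] at h1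
  have hcardA :
      Nat.card {v : Fin 3 → F // ¬ v = 0 ∧
        v 0 ^ (q₀ + 1) + v 1 ^ (q₀ + 1) + v 2 ^ (q₀ + 1) = 0} = CA := by
    refine (natCard_fin3_subtype
      (fun a b c => a ^ (q₀ + 1) + b ^ (q₀ + 1) + c ^ (q₀ + 1) = 0)).trans ?_
    simp only [Nat.card_eq_fintype_card, Fintype.card_subtype]
    try rw [hCAdef]
  rw [hcardA] at h1
  -- h1 : Nat.card T * E = CA
  set NT := Nat.card {P : Projectivization F (Fin 3 → F) //
      (P.rep 0) ^ (q₀ + 1) + (P.rep 1) ^ (q₀ + 1) + (P.rep 2) ^ (q₀ + 1) = 0}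
    with hNTdef
  have hfull : NT * E + 1 = S3 := by rw [h1]; exact hCA
  -- pass to ℤ
  have hEZ : (E : ℤ) = (q₀ : ℤ) ^ 2 - 1 := by
    have : (E : ℤ) + 1 = ((q₀ : ℤ)) ^ 2 := by exact_mod_cast hE
    linarith
  have h2 : (S2 : ℤ) = 1 + (E : ℤ) * ((q₀ : ℤ) + 1) := by exact_mod_cast hS2
  have h3 : (S3 : ℤ) = (S2 : ℤ) + (D : ℤ) * ((q₀ : ℤ) + 1) := by exact_mod_cast hS3
  have h4 : (S2 : ℤ) + (D : ℤ) = (q₀ : ℤ) ^ 2 * (q₀ : ℤ) ^ 2 := by exact_mod_cast hD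
  have h5' : (NT : ℤ) * ((q₀ : ℤ) ^ 2 - 1) + 1 = (S3 : ℤ) := by
    rw [← hEZ]
    exact_mod_cast hfull
  have hS3v : (S3 : ℤ) = ((q₀ : ℤ) ^ 3 + 1) * ((q₀ : ℤ) ^ 2 - 1) + 1 := by
    linear_combination h3 + ((q₀ : ℤ) + 1) * h4 - (q₀ : ℤ) * h2
      - (q₀ : ℤ) * ((q₀ : ℤ) + 1) * hEZ
  have key : (NT : ℤ) * ((q₀ : ℤ) ^ 2 - 1)
      = ((q₀ : ℤ) ^ 3 + 1) * ((q₀ : ℤ) ^ 2 - 1) := by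
    linear_combination h5' + hS3v
  have hne : ((q₀ : ℤ) ^ 2 - 1) ≠ 0 := by
    have h2' : (2 : ℤ) ≤ (q₀ : ℤ) := by exact_mod_cast hq2
    nlinarith
  have hfin : (NT : ℤ) = (q₀ : ℤ) ^ 3 + 1 := mul_right_cancel₀ hne key
  exact_mod_cast hfin
end

section
/- Let q₀ be a prime power and let F be a finite field with q₀⁴ elements. Then the number of points [x : y : z] in the projective plane ℙ²(F) satisfying x^{q₀+1} + y^{q₀+1} + z^{q₀+1} = 0 equals q₀³ + 1. -/
set_option linter.unusedSectionVars false
set_option linter.unusedTactic false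
set_option maxHeartbeats 1000000

open Polynomial Projectivization

namespace Herm

variable {F : Type*} [Field F] [Fintype F]


variable {F : Type*} [Field F] [Fintype F]

lemma card_pow_eq_le (n : ℕ) (hn : 0 < n) (c : F) :
    Nat.card {t : F // t ^ n = c} ≤ n := by
  classical
  have e : {t : F // t ^ n = c} ≃ {t : F // t ∈ (nthRoots n c).toFinset} :=
    Equiv.subtypeEquivRight (by intro t; simp [Polynomial.mem_nthRoots hn])
  rw [Nat.card_congr e, Nat.card_eq_fintype_card, Fintype.card_coe]
  exact le_trans (Multiset.toFinset_card_le _) (Polynomial.card_nthRoots n c)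

lemma card_fibers {α β : Type*} [Fintype α] [Fintype β] [DecidableEq β] (f : α → β) :
    Fintype.card α = ∑ b : β, Fintype.card {a // f a = b} := by
  classical
  rw [← Fintype.card_sigma, Fintype.card_congr (Equiv.sigmaFiberEquiv f)]

lemma card_pow_eq_one (e d : ℕ) (he : Fintype.card F = e + 1) (hd : d ∣ e) (hd0 : 0 < d) :
    Nat.card {t : F // t ^ d = 1} = d := by
  classical
  have he0 : 0 < e := by
    have := Fintype.one_lt_card (α := F)
    omega
  have hed0 : 0 < e / d := Nat.div_pos (Nat.le_of_dvd he0 hd) hd0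
  have hE : Fintype.card {t : F // t ^ e = 1} = e := by
    have equiv : {t : F // t ^ e = 1} ≃ {t : F // t ≠ 0} :=
      Equiv.subtypeEquivRight (by
        intro t
        constructor
        · intro h h0
          rw [h0, zero_pow he0.ne'] at h
          exact zero_ne_one h
        · intro h
          have := FiniteField.pow_card_sub_one_eq_one t h
          rwa [he, Nat.add_sub_cancel] at this)
    rw [Fintype.card_congr equiv, Fintype.card_subtype_compl, he, Fintype.card_subtype_eq]
    omega
  set g : {t : F // t ^ e = 1} → {s : F // s ^ d = 1} := fun t =>
    ⟨t.1 ^ (e / d), by rw [← pow_mul, Nat.div_mul_cancel hd]; exact t.2⟩ with hg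
  have hfib : ∀ s : {s : F // s ^ d = 1},
      Fintype.card {a // g a = s} ≤ e / d := by
    intro s
    have inj : Function.Injective
        (fun a : {a // g a = s} => (⟨a.1.1, by
          have := congrArg Subtype.val a.2
          exact this⟩ : {t : F // t ^ (e / d) = s.1})) := by
      intro a b hab
      apply Subtype.ext; apply Subtype.ext
      simpa using congrArg Subtype.val hab
    calc Fintype.card {a // g a = s} ≤ Fintype.card {t : F // t ^ (e / d) = s.1} :=
          Fintype.card_le_of_injective _ inj
      _ ≤ e / d := by rw [← Nat.card_eq_fintype_card]; exact card_pow_eq_le _ hed0 _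
  have hsum := card_fibers g
  rw [hE] at hsum
  have hub : e ≤ Fintype.card {s : F // s ^ d = 1} * (e / d) := by
    calc e = ∑ s : {s : F // s ^ d = 1}, Fintype.card {a // g a = s} := hsum
      _ ≤ ∑ _s : {s : F // s ^ d = 1}, (e / d) := Finset.sum_le_sum (fun s _ => hfib s)
      _ = Fintype.card {s : F // s ^ d = 1} * (e / d) := by
          rw [Finset.sum_const, Finset.card_univ, smul_eq_mul]
  have hge : d ≤ Fintype.card {s : F // s ^ d = 1} := by
    refine Nat.le_of_mul_le_mul_right ?_ hed0
    calc d * (e / d) = e := Nat.mul_div_cancel' hd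
      _ ≤ _ := hub
  have hle : Nat.card {s : F // s ^ d = 1} ≤ d := card_pow_eq_le d hd0 1
  rw [Nat.card_eq_fintype_card] at hle ⊢
  omega


variable (q : ℕ) (hq2 : 2 ≤ q) (hcard : Fintype.card F = q^4)
  (haddq : ∀ x y : F, (x+y)^q = x^q + y^q)


  (hq2 : 2 ≤ q) (hcard : Fintype.card F = q^4)
  (haddq : ∀ x y : F, (x+y)^q = x^q + y^q)

lemma pow_congr {M : Type*} [Monoid M] (t : M) {m n : ℕ} (h : m = n) : t^m = t^n := by rw [h]

section
include hq2 haddq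

lemma negq : ∀ x : F, (-x)^q = -(x^q) := by
  intro x
  have h := haddq x (-x)
  rw [add_neg_cancel, zero_pow (by omega : q ≠ 0)] at h
  linear_combination -h

lemma subq : ∀ x y : F, (x - y)^q = x^q - y^q := by
  intro x y
  rw [sub_eq_add_neg, haddq, negq q hq2 haddq, sub_eq_add_neg]

lemma twoq : (2:F)^q = 2 := by
  have := haddq 1 1
  norm_num at this
  exact this

lemma hq2q : ∀ t : F, t^(q^2) = (t^q)^q := by
  intro t; rw [← pow_mul, pow_two]

lemma haddq2 : ∀ u v : F, (u+v)^(q^2) = u^(q^2) + v^(q^2) := by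
  intro u v
  rw [hq2q q hq2 haddq, hq2q q hq2 haddq u, hq2q q hq2 haddq v, haddq, haddq]

lemma hnegq2 : ∀ u : F, (-u)^(q^2) = -(u^(q^2)) := by
  intro u
  have h := haddq2 q hq2 haddq u (-u)
  rw [add_neg_cancel, zero_pow (pow_ne_zero 2 (by omega : q ≠ 0))] at h
  linear_combination -h

end

include hcard in
lemma powq4 : ∀ x : F, x^(q^4) = x := by
  intro x; rw [← hcard]; exact FiniteField.pow_card x

section
include hq2 haddq

lemma subQ (a α σ : F) (h1 : a * a^(q^2) = α) (h2 : a + a^(q^2) = σ)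
    (hα : α^q = α) (hσ : σ^q = σ) (h4 : a^(q^4) = a) : a^(q^2) = a := by
  have hqq := hq2q q hq2 haddq
  have key : (a^q - a) * (a^q - a^(q^2)) = 0 := by
    have hz : a^2 - σ*a + α = 0 := by rw [← h1, ← h2]; ring
    have e1 : (a^q)^2 - σ * a^q + α = 0 := by
      have h' : (a^2 - σ*a + α)^q = (a^q)^2 - σ * a^q + α := by
        rw [haddq, subq q hq2 haddq, mul_pow, hσ, hα, pow_right_comm]
      rw [hz, zero_pow (by omega : q ≠ 0)] at h'
      linear_combination -h'
    linear_combination e1 - a^q * h2 + h1 + (a^q - a) * hqq a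
  rcases mul_eq_zero.mp key with h | h
  · have haq : a^q = a := by linear_combination h
    rw [hqq, haq, haq]
  · have haq : a^q = a^(q^2) := by linear_combination h
    have e2 : a^(q^2) = a^(q^3) :=
      calc a^(q^2) = (a^q)^q := hqq a
        _ = (a^(q^2))^q := by rw [haq]
        _ = a^(q^3) := by rw [← pow_mul]; exact pow_congr a (by ring)
    have e3 : a^(q^3) = a^(q^4) :=
      calc a^(q^3) = (a^(q^2))^q := by rw [← pow_mul]; exact pow_congr a (by ring)
        _ = (a^(q^3))^q := by rw [e2]
        _ = a^(q^4) := by rw [← pow_mul]; exact pow_congr a (by ring)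
    rw [e2, e3, h4]
end

section
include hq2 hcard haddq

lemma core (x y z : F) (hz : z ≠ 0) (heq : x^(q+1) + y^(q+1) + z^(q+1) = 0) :
    (x * z⁻¹)^(q^2) = x * z⁻¹ := by
  have hq0 : q ≠ 0 := by omega
  have hnorm : ∀ t : F, (t^(q+1) * (t^(q+1))^(q^2))^q = t^(q+1) * (t^(q+1))^(q^2) := by
    intro t
    have e : t^(q+1) * (t^(q+1))^(q^2) = t^(q^3+q^2+q+1) := by
      rw [← pow_mul, ← pow_add]; exact pow_congr t (by ring)
    rw [e, ← pow_mul, pow_congr t (show (q^3+q^2+q+1)*q = q^4 + (q^3+q^2+q) by ring),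
      pow_add, powq4 q hcard t]
    exact (pow_succ' t _).symm
  set r := x * z⁻¹ with hrdef
  set s := y * z⁻¹ with hsdef
  have hz1 : z^(q+1) ≠ 0 := pow_ne_zero _ hz
  have hr1 : r^(q+1) + s^(q+1) + 1 = 0 := by
    have h0 : (x^(q+1) + y^(q+1) + z^(q+1)) * (z^(q+1))⁻¹ = 0 := by rw [heq]; ring
    rw [hrdef, hsdef, mul_pow, mul_pow, inv_pow, ← h0, add_mul, add_mul, mul_inv_cancel₀ hz1]
  clear_value r s
  clear hrdef hsdef heq hz hz1
  have hαr := hnorm r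
  have hβr := hnorm s
  set a := r^(q+1) with ha
  set b := s^(q+1) with hb
  clear_value a b
  -- hr1 : a + b + 1 = 0, hαr : (a * a^(q^2))^q = _, etc.
  have hab : b = -1 - a := by linear_combination hr1
  have hbq2 : b^(q^2) = -1 - a^(q^2) := by
    rw [hab, sub_eq_add_neg, haddq2 q hq2 haddq, hnegq2 q hq2 haddq, hnegq2 q hq2 haddq, one_pow]
    ring
  have hσval : a + a^(q^2) = (b * b^(q^2)) - (a * a^(q^2)) - 1 := by
    linear_combination (-(b^(q^2))) * hab + (1+a) * hbq2
  have hσ : ((b * b^(q^2)) - (a * a^(q^2)) - 1)^q = (b * b^(q^2)) - (a * a^(q^2)) - 1 := by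
    rw [subq q hq2 haddq, subq q hq2 haddq, hαr, hβr, one_pow]
  have h4a : a^(q^4) = a := powq4 q hcard a
  have h4b : b^(q^4) = b := powq4 q hcard b
  have ha2 : a^(q^2) = a := subQ q hq2 haddq a _ _ rfl hσval hαr hσ h4a
  have hτval : b + b^(q^2) = (a * a^(q^2)) - (b * b^(q^2)) - 1 := by
    linear_combination (1 + b^(q^2)) * hab - a * hbq2
  have hτ : ((a * a^(q^2)) - (b * b^(q^2)) - 1)^q = (a * a^(q^2)) - (b * b^(q^2)) - 1 := by
    rw [subq q hq2 haddq, subq q hq2 haddq, hαr, hβr, one_pow]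
  have hb2 : b^(q^2) = b := subQ q hq2 haddq b _ _ rfl hτval hβr hτ h4b
  -- a^2, b^2 fixed by ^q
  have hA : (a*a)^q = a*a := by rw [ha2] at hαr; exact hαr
  have hB : (b*b)^q = b*b := by rw [hb2] at hβr; exact hβr
  have hb2a : b*b = (1+a)*(1+a) := by linear_combination (b - 1 - a) * hab
  have hexp : ((1 + 2*a) + a*a)^q = 1 + 2*(a^q) + a*a := by
    rw [haddq, haddq, one_pow, mul_pow, twoq q hq2 haddq, hA]
  have h2a : 2*(a^q) = 2*a := by
    have h' : ((1 + 2*a) + a*a)^q = (1+a)*(1+a) := by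
      rw [show (1:F) + 2*a + a*a = b*b by linear_combination -hb2a + (by ring : (1:F)+2*a+a*a = (1+a)*(1+a))]
      rw [hB, hb2a]
    rw [hexp] at h'
    linear_combination h'
  have e1 : (a^q)^2 = a^2 := by
    rw [pow_two, pow_two, ← mul_pow]
    exact hA
  have hsq : (a^q - a)^2 = 0 := by linear_combination e1 - a * h2a
  have haq : a^q = a := by
    have h0 := pow_eq_zero_iff (n := 2) (by norm_num) |>.mp hsq
    linear_combination h0
  rcases eq_or_ne r 0 with hr | hr
  · rw [hr, zero_pow (pow_ne_zero 2 hq0)]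
  · have hc : r^(q^2) * r^q = r * r^q := by
      calc r^(q^2) * r^q = r^((q+1)*q) := by
            rw [← pow_add]; exact pow_congr r (by ring)
        _ = (r^(q+1))^q := by rw [pow_mul]
        _ = r^(q+1) := by rw [← ha]; exact haq
        _ = r * r^q := pow_succ' r q
    exact mul_right_cancel₀ (pow_ne_zero q hr) hc

end




section
include hq2 hcard

lemma hcard' : Fintype.card F = (q^4 - 1) + 1 := by
  rw [hcard]
  have : 1 ≤ q^4 := Nat.one_le_pow _ _ (by omega)
  omega

lemma prod2 : (q-1)*(q+1) = q^2-1 := by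
  have h1 : 1 ≤ q := by omega
  zify [h1, Nat.one_le_pow 2 q (by omega)]
  ring

lemma prod1 : (q^2-1)*(q^2+1) = q^4-1 := by
  have h1 : 1 ≤ q^2 := Nat.one_le_pow _ _ (by omega)
  zify [h1, Nat.one_le_pow 4 q (by omega)]
  ring

lemma dvd1 : (q^2-1) ∣ (q^4-1) := ⟨q^2+1, (prod1 q hq2 hcard).symm⟩

lemma dvd2 : (q-1) ∣ (q^4-1) :=
  dvd_trans ⟨q+1, (prod2 q hq2 hcard).symm⟩ (dvd1 q hq2 hcard)

lemma cardA : Nat.card {t : F // t^(q^2-1) = 1} = q^2-1 :=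
  card_pow_eq_one _ _ (hcard' q hq2 hcard) (dvd1 q hq2 hcard)
    (by have h4 : 4 ≤ q^2 := by nlinarith
        omega)

lemma cardB : Nat.card {t : F // t^(q-1) = 1} = q-1 :=
  card_pow_eq_one _ _ (hcard' q hq2 hcard) (dvd2 q hq2 hcard) (by omega)

-- membership characterizations
lemma memK_iff (t : F) : t^(q^2) = t ↔ (t = 0 ∨ t^(q^2-1) = 1) := by
  have h2 : 1 ≤ q^2 := Nat.one_le_pow _ _ (by omega)
  constructor
  · intro h
    rcases eq_or_ne t 0 with h0 | h0
    · exact Or.inl h0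
    · right
      have : t^(q^2-1) * t = 1 * t := by
        rw [← pow_succ, one_mul]
        rw [show q^2-1+1 = q^2 by omega]
        exact h
      exact mul_right_cancel₀ h0 this
  · rintro (h0 | h1)
    · rw [h0, zero_pow (by positivity : q^2 ≠ 0)]
    · calc t^(q^2) = t^(q^2-1) * t := by
            rw [← pow_succ]; congr 1; omega
        _ = t := by rw [h1, one_mul]

lemma cardK : Nat.card {t : F // t^(q^2) = t} = q^2 := by
  classical
  have e : {t : F // t^(q^2) = t} ≃ {t : F // t = 0 ∨ t^(q^2-1) = 1} :=
    Equiv.subtypeEquivRight (fun t => memK_iff q hq2 hcard t)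
  rw [Nat.card_congr e, Nat.card_eq_fintype_card]
  rw [Fintype.card_subtype_or_disjoint]
  · have h1 : Fintype.card {t : F // t = 0} = 1 := Fintype.card_subtype_eq (0:F)
    have h2 : Fintype.card {t : F // t^(q^2-1) = 1} = q^2-1 := by
      rw [← Nat.card_eq_fintype_card]; exact cardA q hq2 hcard
    rw [h1, h2]
    have : 1 ≤ q^2 := Nat.one_le_pow _ _ (by omega)
    omega
  · rintro P hP hQ t ht
    have h0 := hP t ht
    have h1 := hQ t ht
    simp only at h0 h1
    rw [h0, zero_pow] at h1
    · exact absurd h1 zero_ne_one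
    · have : 4 ≤ q^2 := by nlinarith
      omega

lemma cardKstar : Nat.card {t : F // t^(q^2) = t ∧ t ≠ 0} = q^2-1 := by
  have e : {t : F // t^(q^2) = t ∧ t ≠ 0} ≃ {t : F // t^(q^2-1) = 1} :=
    Equiv.subtypeEquivRight (by
      intro t
      constructor
      · rintro ⟨h1, h2⟩
        rcases (memK_iff q hq2 hcard t).mp h1 with h | h
        · exact absurd h h2
        · exact h
      · intro h
        have ht0 : t ≠ 0 := by
          intro h0
          rw [h0, zero_pow] at h
          · exact zero_ne_one h
          · have : 4 ≤ q^2 := by nlinarith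
            omega
        exact ⟨(memK_iff q hq2 hcard t).mpr (Or.inr h), ht0⟩)
  rw [Nat.card_congr e]; exact cardA q hq2 hcard

-- the key fiber count
lemma fiber_card (c : F) (hc : c^q = c) (hc0 : c ≠ 0) :
    Nat.card {t : F // t^(q+1) = c} = q+1 := by
  classical
  have hcB : c^(q-1) = 1 := by
    have : c^(q-1) * c = 1 * c := by
      rw [← pow_succ, one_mul, show q-1+1 = q by omega]; exact hc
    exact mul_right_cancel₀ hc0 this
  set g : {t : F // t^(q^2-1) = 1} → {s : F // s^(q-1) = 1} := fun t =>
    ⟨t.1^(q+1), by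
      rw [← pow_mul, pow_congr t.1 (show (q+1)*(q-1) = q^2-1 by
        rw [mul_comm]; exact prod2 q hq2 hcard)]
      exact t.2⟩ with hg
  have fib_equiv : ∀ s : {s : F // s^(q-1) = 1},
      {a // g a = s} ≃ {t : F // t^(q+1) = s.1} := by
    intro s
    refine ⟨fun a => ⟨a.1.1, by simpa using congrArg Subtype.val a.2⟩,
      fun t => ⟨⟨t.1, ?_⟩, ?_⟩, fun a => by ext; rfl, fun t => by ext; rfl⟩
    · rw [← prod2 q hq2 hcard, mul_comm, pow_mul, t.2, s.2]
    · apply Subtype.ext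
      exact t.2
  have hsum : ∑ s : {s : F // s^(q-1) = 1}, Fintype.card {a // g a = s}
      = q^2 - 1 := by
    rw [← card_fibers g, ← Nat.card_eq_fintype_card]
    exact cardA q hq2 hcard
  have hle : ∀ s : {s : F // s^(q-1) = 1}, Fintype.card {a // g a = s} ≤ q+1 := by
    intro s
    rw [Fintype.card_congr (fib_equiv s), ← Nat.card_eq_fintype_card]
    exact card_pow_eq_le _ (by omega) _
  have hconst : ∑ _s : {s : F // s^(q-1) = 1}, (q+1)
      = q^2 - 1 := by
    rw [Finset.sum_const, Finset.card_univ, ← Nat.card_eq_fintype_card, cardB q hq2 hcard,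
      smul_eq_mul, prod2 q hq2 hcard]
  have heach := (Finset.sum_eq_sum_iff_of_le (fun s _ => hle s)).mp (by rw [hsum, hconst])
  have := heach ⟨c, hcB⟩ (Finset.mem_univ _)
  rw [Nat.card_congr (fib_equiv ⟨c, hcB⟩).symm, Nat.card_eq_fintype_card]
  exact this

-- elements with t^(q+1) = c for c in k^* automatically lie in K
lemma mem_K_of_fiber (c t : F) (hc : c^q = c) (hc0 : c ≠ 0) (ht : t^(q+1) = c) :
    t^(q^2) = t := by
  have hcB : c^(q-1) = 1 := by
    have : c^(q-1) * c = 1 * c := by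
      rw [← pow_succ, one_mul, show q-1+1 = q by omega]; exact hc
    exact mul_right_cancel₀ hc0 this
  apply (memK_iff q hq2 hcard t).mpr
  right
  rw [← prod2 q hq2 hcard, mul_comm, pow_mul, ht, hcB]

end




section
include hq2 hcard haddq

-- powers of K elements are in k
lemma powk (t : F) (ht : t^(q^2) = t) : (t^(q+1))^q = t^(q+1) := by
  calc (t^(q+1))^q = t^(q^2) * t^q := by
        rw [← pow_mul]
        rw [pow_congr t (show (q+1)*q = q^2 + q by ring), pow_add]
    _ = t * t^q := by rw [ht]
    _ = t^(q+1) := (pow_succ' t q).symm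

-- card of the fiber type over a pair
lemma fiber_over_zero :
    Nat.card {z : {t : F // t^(q^2) = t} // z.1^(q+1) = -(0:F)} = 1 := by
  classical
  have e : {z : {t : F // t^(q^2) = t} // z.1^(q+1) = -0} ≃
        {z : {t : F // t^(q^2) = t} // z = ⟨0, by
          rw [zero_pow (by positivity : q^2 ≠ 0)]⟩} :=
      Equiv.subtypeEquivRight (by
        intro z
        rw [neg_zero]
        constructor
        · intro h
          apply Subtype.ext
          exact pow_eq_zero_iff (by omega : q+1 ≠ 0) |>.mp h
        · intro h
          rw [h]
          exact zero_pow (by omega : q+1 ≠ 0))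
  rw [Nat.card_congr e, Nat.card_eq_fintype_card, Fintype.card_subtype_eq]

include hq2 hcard haddq in
lemma fiber_over_ne (c : F) (hc : c^q = c) (h0 : c ≠ 0) :
    Nat.card {z : {t : F // t^(q^2) = t} // z.1^(q+1) = -c} = q+1 := by
  classical
  have hnc : (-c)^q = -c := by rw [negq q hq2 haddq, hc]
  have hnc0 : -c ≠ 0 := neg_ne_zero.mpr h0
  have e : {z : {t : F // t^(q^2) = t} // z.1^(q+1) = -c} ≃ {t : F // t^(q+1) = -c} := by
    refine ⟨fun z => ⟨z.1.1, z.2⟩, fun t => ⟨⟨t.1, mem_K_of_fiber q hq2 hcard (-c) t.1 hnc hnc0 t.2⟩, t.2⟩, fun z => by ext; rfl, fun t => by ext; rfl⟩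
  rw [Nat.card_congr e]
  exact fiber_card q hq2 hcard (-c) hnc hnc0

-- N2 : pairs (x,y) in K^2 with x^(q+1)+y^(q+1)=0
lemma cardN2 :
    Nat.card {p : {t : F // t^(q^2) = t} × {t : F // t^(q^2) = t} //
      p.1.1^(q+1) + p.2.1^(q+1) = 0} = 1 + (q+1)*(q^2-1) := by
  classical
  set KT := {t : F // t^(q^2) = t} with hKT
  have e : {p : KT × KT // p.1.1^(q+1) + p.2.1^(q+1) = 0} ≃
      Σ y : KT, {x : KT // x.1^(q+1) = -(y.1^(q+1))} := by
    refine ⟨fun p => ⟨p.1.2, ⟨p.1.1, by linear_combination p.2⟩⟩,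
      fun s => ⟨(s.2.1, s.1), by linear_combination s.2.2⟩, fun p => by ext <;> rfl, fun s => by
        rcases s with ⟨y, x⟩; rfl⟩
  rw [Nat.card_congr e, Nat.card_eq_fintype_card, Fintype.card_sigma]
  have hval : ∀ y : KT, Fintype.card {x : KT // x.1^(q+1) = -(y.1^(q+1))} =
      if y.1 = 0 then 1 else q+1 := by
    intro y
    rw [← Nat.card_eq_fintype_card]
    by_cases hy : y.1 = 0
    · rw [if_pos hy, hy]
      have : ((0:F)^(q+1)) = 0 := zero_pow (by omega)
      rw [this]
      exact fiber_over_zero q hq2 hcard haddq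
    · rw [if_neg hy]
      exact fiber_over_ne q hq2 hcard haddq (y.1^(q+1))
        (powk q hq2 hcard haddq y.1 y.2) (pow_ne_zero _ hy)
  calc ∑ y : KT, Fintype.card {x : KT // x.1^(q+1) = -(y.1^(q+1))}
      = ∑ y : KT, if y.1 = 0 then 1 else q+1 := Finset.sum_congr rfl (fun y _ => hval y)
    _ = 1 + (q+1)*(q^2-1) := by
        rw [Finset.sum_ite, Finset.sum_const, Finset.sum_const]
        have h1 : (Finset.univ.filter (fun y : KT => y.1 = 0)).card = 1 := by
          rw [← Fintype.card_subtype]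
          have e2 : {y : KT // y.1 = 0} ≃ {y : KT // y = ⟨0, by
            rw [zero_pow (by positivity : q^2 ≠ 0)]⟩} :=
            Equiv.subtypeEquivRight (by
              intro z; constructor
              · intro h; exact Subtype.ext h
              · intro h; rw [h])
          rw [Fintype.card_congr e2, Fintype.card_subtype_eq]
        have h2 : (Finset.univ.filter (fun y : KT => ¬(y.1 = 0))).card = q^2-1 := by
          rw [← Fintype.card_subtype, ← Nat.card_eq_fintype_card]
          have e2 : {y : KT // ¬(y.1 = 0)} ≃ {t : F // t^(q^2) = t ∧ t ≠ 0} := by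
            refine ⟨fun y => ⟨y.1.1, y.1.2, y.2⟩, fun t => ⟨⟨t.1, t.2.1⟩, t.2.2⟩,
              fun y => by ext; rfl, fun t => by ext; rfl⟩
          rw [Nat.card_congr e2]
          exact cardKstar q hq2 hcard
        rw [h1, h2]
        simp only [smul_eq_mul, one_mul, mul_one]
        rw [Nat.mul_comm (q^2-1) (q+1)]
  done

-- total count of K-rational triples (incl. zero) with the curve equation
lemma cardT2 :
    Nat.card {p : ({t : F // t^(q^2) = t} × {t : F // t^(q^2) = t}) × {t : F // t^(q^2) = t} //
      p.1.1.1^(q+1) + p.1.2.1^(q+1) + p.2.1^(q+1) = 0} = (q^2-1)*(q^3+1) + 1 := by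
  classical
  set KT := {t : F // t^(q^2) = t} with hKT
  have e : {p : (KT × KT) × KT // p.1.1.1^(q+1) + p.1.2.1^(q+1) + p.2.1^(q+1) = 0} ≃
      Σ xy : KT × KT, {z : KT // z.1^(q+1) = -(xy.1.1^(q+1) + xy.2.1^(q+1))} := by
    refine ⟨fun p => ⟨p.1.1, ⟨p.1.2, by linear_combination p.2⟩⟩,
      fun s => ⟨(s.1, s.2.1), by linear_combination s.2.2⟩,
      fun p => by rcases p with ⟨⟨xy, z⟩, h⟩; rfl,
      fun s => by rcases s with ⟨xy, z⟩; rfl⟩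
  rw [Nat.card_congr e, Nat.card_eq_fintype_card, Fintype.card_sigma]
  have hsumq : ∀ xy : KT × KT, (xy.1.1^(q+1) + xy.2.1^(q+1))^q
      = xy.1.1^(q+1) + xy.2.1^(q+1) := by
    intro xy
    rw [haddq, powk q hq2 hcard haddq xy.1.1 xy.1.2, powk q hq2 hcard haddq xy.2.1 xy.2.2]
  have hval : ∀ xy : KT × KT,
      Fintype.card {z : KT // z.1^(q+1) = -(xy.1.1^(q+1) + xy.2.1^(q+1))} =
      if xy.1.1^(q+1) + xy.2.1^(q+1) = 0 then 1 else q+1 := by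
    intro xy
    rw [← Nat.card_eq_fintype_card]
    by_cases hxy : xy.1.1^(q+1) + xy.2.1^(q+1) = 0
    · rw [if_pos hxy, hxy]
      exact fiber_over_zero q hq2 hcard haddq
    · rw [if_neg hxy]
      exact fiber_over_ne q hq2 hcard haddq _ (hsumq xy) hxy
  calc ∑ xy : KT × KT, Fintype.card {z : KT // z.1^(q+1) = -(xy.1.1^(q+1) + xy.2.1^(q+1))}
      = ∑ xy : KT × KT, if xy.1.1^(q+1) + xy.2.1^(q+1) = 0 then 1 else q+1 :=
        Finset.sum_congr rfl (fun xy _ => hval xy)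
    _ = (q^2-1)*(q^3+1) + 1 := by
        rw [Finset.sum_ite, Finset.sum_const, Finset.sum_const]
        have h1 : (Finset.univ.filter
            (fun xy : KT × KT => xy.1.1^(q+1) + xy.2.1^(q+1) = 0)).card = 1 + (q+1)*(q^2-1) := by
          rw [← Fintype.card_subtype, ← Nat.card_eq_fintype_card]
          exact cardN2 q hq2 hcard haddq
        have htot : Fintype.card (KT × KT) = q^2 * q^2 := by
          rw [Fintype.card_prod, ← Nat.card_eq_fintype_card, hKT, cardK q hq2 hcard]
        have h2 : (Finset.univ.filter
            (fun xy : KT × KT => ¬(xy.1.1^(q+1) + xy.2.1^(q+1) = 0))).card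
            = q^2*q^2 - (1 + (q+1)*(q^2-1)) := by
          have hadd := Finset.card_filter_add_card_filter_not
            (s := (Finset.univ : Finset (KT × KT)))
            (p := fun xy : KT × KT => xy.1.1^(q+1) + xy.2.1^(q+1) = 0)
          rw [Finset.card_univ, htot, h1] at hadd
          omega
        rw [h1, h2]
        simp only [smul_eq_mul, mul_one]
        -- arithmetic
        have e1 : 1 ≤ q^2 := Nat.one_le_pow _ _ (by omega)
        have e2 : 1 + (q+1)*(q^2-1) ≤ q^2*q^2 := by
          zify [e1]
          nlinarith [sq_nonneg q]
        zify [e1, e2]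
        ring
  done

end




section
include hq2

lemma eqn_smul (v : Fin 3 → F) (c : F)
    (h : (v 0)^(q+1) + (v 1)^(q+1) + (v 2)^(q+1) = 0) :
    ((c • v) 0)^(q+1) + ((c • v) 1)^(q+1) + ((c • v) 2)^(q+1) = 0 := by
  simp only [Pi.smul_apply, smul_eq_mul, mul_pow]
  linear_combination (c^(q+1)) * h

lemma mem_curve_of_mk (v : Fin 3 → F) (hv : v ≠ 0)
    (h : (v 0)^(q+1) + (v 1)^(q+1) + (v 2)^(q+1) = 0) :
    (((Projectivization.mk F v hv).rep) 0)^(q+1) + (((Projectivization.mk F v hv).rep) 1)^(q+1)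
      + (((Projectivization.mk F v hv).rep) 2)^(q+1) = 0 := by
  obtain ⟨a, ha⟩ := (mk_eq_mk_iff F _ _ ((Projectivization.mk F v hv).rep_nonzero) hv).mp
    (mk_rep (Projectivization.mk F v hv))
  rw [← ha, Units.smul_def]
  exact eqn_smul q hq2 v a.1 h

end

section
include hq2 hcard haddq

lemma exists_K_rep (P : Projectivization F (Fin 3 → F))
    (hP : ((P.rep) 0)^(q+1) + ((P.rep) 1)^(q+1) + ((P.rep) 2)^(q+1) = 0) :
    ∃ (w : Fin 3 → F) (hw : w ≠ 0), (∀ i, (w i)^(q^2) = w i) ∧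
      ((w 0)^(q+1) + (w 1)^(q+1) + (w 2)^(q+1) = 0) ∧ Projectivization.mk F w hw = P := by
  obtain ⟨i0, hi0⟩ := Function.ne_iff.mp P.rep_nonzero
  have hi0' : P.rep i0 ≠ 0 := hi0
  refine ⟨(P.rep i0)⁻¹ • P.rep, smul_ne_zero (inv_ne_zero hi0') P.rep_nonzero, ?_, ?_, ?_⟩
  · intro j
    simp only [Pi.smul_apply, smul_eq_mul]
    fin_cases i0 <;> fin_cases j
    · show ((P.rep 0)⁻¹ * P.rep 0)^(q^2) = (P.rep 0)⁻¹ * P.rep 0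
      rw [inv_mul_cancel₀ (show P.rep 0 ≠ 0 from hi0')]; exact one_pow _
    · show ((P.rep 0)⁻¹ * P.rep 1)^(q^2) = (P.rep 0)⁻¹ * P.rep 1
      rw [mul_comm]
      exact core q hq2 hcard haddq (P.rep 1) (P.rep 2) (P.rep 0) hi0' (by linear_combination hP)
    · show ((P.rep 0)⁻¹ * P.rep 2)^(q^2) = (P.rep 0)⁻¹ * P.rep 2
      rw [mul_comm]
      exact core q hq2 hcard haddq (P.rep 2) (P.rep 1) (P.rep 0) hi0' (by linear_combination hP)
    · show ((P.rep 1)⁻¹ * P.rep 0)^(q^2) = (P.rep 1)⁻¹ * P.rep 0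
      rw [mul_comm]
      exact core q hq2 hcard haddq (P.rep 0) (P.rep 2) (P.rep 1) hi0' (by linear_combination hP)
    · show ((P.rep 1)⁻¹ * P.rep 1)^(q^2) = (P.rep 1)⁻¹ * P.rep 1
      rw [inv_mul_cancel₀ (show P.rep 1 ≠ 0 from hi0')]; exact one_pow _
    · show ((P.rep 1)⁻¹ * P.rep 2)^(q^2) = (P.rep 1)⁻¹ * P.rep 2
      rw [mul_comm]
      exact core q hq2 hcard haddq (P.rep 2) (P.rep 0) (P.rep 1) hi0' (by linear_combination hP)
    · show ((P.rep 2)⁻¹ * P.rep 0)^(q^2) = (P.rep 2)⁻¹ * P.rep 0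
      rw [mul_comm]
      exact core q hq2 hcard haddq (P.rep 0) (P.rep 1) (P.rep 2) hi0' (by linear_combination hP)
    · show ((P.rep 2)⁻¹ * P.rep 1)^(q^2) = (P.rep 2)⁻¹ * P.rep 1
      rw [mul_comm]
      exact core q hq2 hcard haddq (P.rep 1) (P.rep 0) (P.rep 2) hi0' (by linear_combination hP)
    · show ((P.rep 2)⁻¹ * P.rep 2)^(q^2) = (P.rep 2)⁻¹ * P.rep 2
      rw [inv_mul_cancel₀ (show P.rep 2 ≠ 0 from hi0')]; exact one_pow _
  · exact eqn_smul q hq2 P.rep _ hP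
  · have : Projectivization.mk F ((P.rep i0)⁻¹ • P.rep)
        (smul_ne_zero (inv_ne_zero hi0') P.rep_nonzero) = Projectivization.mk F P.rep P.rep_nonzero := by
      apply (mk_eq_mk_iff F _ _ _ P.rep_nonzero).mpr
      exact ⟨Units.mk0 (P.rep i0)⁻¹ (inv_ne_zero hi0'), by rw [Units.smul_def]; rfl⟩
    rw [this, mk_rep]

lemma fibration :
    Nat.card {v : Fin 3 → F // (∀ i, (v i)^(q^2) = v i) ∧ (v ≠ 0 ∧
        (v 0)^(q+1) + (v 1)^(q+1) + (v 2)^(q+1) = 0)} =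
      Nat.card {P : Projectivization F (Fin 3 → F) //
        (P.rep 0)^(q+1) + (P.rep 1)^(q+1) + (P.rep 2)^(q+1) = 0} * (q^2 - 1) := by
  classical
  set SK := {v : Fin 3 → F // (∀ i, (v i)^(q^2) = v i) ∧ (v ≠ 0 ∧
        (v 0)^(q+1) + (v 1)^(q+1) + (v 2)^(q+1) = 0)} with hSK
  set C := {P : Projectivization F (Fin 3 → F) //
        (P.rep 0)^(q+1) + (P.rep 1)^(q+1) + (P.rep 2)^(q+1) = 0} with hC
  set Φ : SK → C := fun v =>
    ⟨Projectivization.mk F v.1 v.2.2.1, mem_curve_of_mk q hq2 v.1 v.2.2.1 v.2.2.2⟩ with hΦ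
  have hfib : ∀ P : C, Nat.card {v : SK // Φ v = P} = q^2 - 1 := by
    intro P
    obtain ⟨w, hw, hwK, hweqn, hwmk⟩ := exists_K_rep q hq2 hcard haddq P.1 P.2
    obtain ⟨iw, hiw⟩ := Function.ne_iff.mp hw
    have hiw' : w iw ≠ 0 := hiw
    rw [← cardKstar q hq2 hcard (F := F)]
    symm
    apply Nat.card_eq_of_bijective (fun lam =>
      (⟨⟨lam.1 • w, fun i => by
          simp only [Pi.smul_apply, smul_eq_mul, mul_pow, lam.2.1, hwK i],
        smul_ne_zero lam.2.2 hw,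
        eqn_smul q hq2 w lam.1 hweqn⟩, by
          apply Subtype.ext
          show Projectivization.mk F (lam.1 • w) _ = P.1
          rw [← hwmk]
          apply (mk_eq_mk_iff F _ _ _ hw).mpr
          exact ⟨Units.mk0 lam.1 lam.2.2, rfl⟩⟩ : {v : SK // Φ v = P}))
    constructor
    · intro lam mu h
      have h1 : lam.1 • w = mu.1 • w := congrArg (fun v : {v : SK // Φ v = P} => v.1.1) h
      have h2 : lam.1 * w iw = mu.1 * w iw := congrFun h1 iw
      exact Subtype.ext (mul_right_cancel₀ hiw' h2)
    · rintro ⟨⟨v, hvK, hv0, hveqn⟩, hvP⟩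
      have hmkeq : Projectivization.mk F v hv0 = Projectivization.mk F w hw := by
        have : Projectivization.mk F v hv0 = P.1 := congrArg Subtype.val hvP
        rw [this, ← hwmk]
      obtain ⟨a, ha⟩ := (mk_eq_mk_iff F _ _ hv0 hw).mp hmkeq
      have haK : (a.1)^(q^2) = a.1 := by
        have hcoord : a.1 * w iw = v iw := by
          have := congrFun ha iw
          simpa [Units.smul_def] using this
        have h1 : (v iw)^(q^2) = v iw := hvK iw
        rw [← hcoord, mul_pow, hwK iw] at h1
        exact mul_right_cancel₀ hiw' h1
      refine ⟨⟨a.1, haK, a.ne_zero⟩, ?_⟩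
      apply Subtype.ext
      apply Subtype.ext
      show a.1 • w = v
      rw [← Units.smul_def]
      exact ha
  haveI : Finite (Projectivization F (Fin 3 → F)) :=
    Quotient.finite _
  haveI : Fintype C := Fintype.ofFinite C
  haveI : Fintype SK := Fintype.ofFinite SK
  have hsum := card_fibers Φ
  have : ∀ P : C, Fintype.card {v : SK // Φ v = P} = q^2-1 := by
    intro P
    rw [← Nat.card_eq_fintype_card]
    exact hfib P
  rw [Nat.card_eq_fintype_card, Nat.card_eq_fintype_card, hsum]
  calc ∑ P : C, Fintype.card {v : SK // Φ v = P}
      = ∑ _P : C, (q^2-1) := Finset.sum_congr rfl (fun P _ => this P)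
    _ = Fintype.card C * (q^2-1) := by
        rw [Finset.sum_const, Finset.card_univ, smul_eq_mul]

-- relate SK to the product count
lemma cardSK :
    Nat.card {v : Fin 3 → F // (∀ i, (v i)^(q^2) = v i) ∧ (v ≠ 0 ∧
        (v 0)^(q+1) + (v 1)^(q+1) + (v 2)^(q+1) = 0)} = (q^2-1)*(q^3+1) := by
  classical
  set KT := {t : F // t^(q^2) = t} with hKT
  set T := {p : (KT × KT) × KT // p.1.1.1^(q+1) + p.1.2.1^(q+1) + p.2.1^(q+1) = 0} with hT
  -- zero element of T
  have hz0K : (0:F)^(q^2) = 0 := zero_pow (by positivity)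
  set z0 : T := ⟨((⟨0, hz0K⟩, ⟨0, hz0K⟩), ⟨0, hz0K⟩), by
    simp [zero_pow (show q+1 ≠ 0 by omega)]⟩ with hz0
  have e : {a : T // ¬ (a = z0)} ≃ {v : Fin 3 → F // (∀ i, (v i)^(q^2) = v i) ∧ (v ≠ 0 ∧
        (v 0)^(q+1) + (v 1)^(q+1) + (v 2)^(q+1) = 0)} := by
    refine ⟨fun a => ⟨![a.1.1.1.1.1, a.1.1.1.2.1, a.1.1.2.1], ⟨?_, ?_, ?_⟩⟩,
      fun v => ⟨⟨((⟨v.1 0, v.2.1 0⟩, ⟨v.1 1, v.2.1 1⟩), ⟨v.1 2, v.2.1 2⟩), by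
        simpa using v.2.2.2⟩, ?_⟩, ?_, ?_⟩
    · intro i
      fin_cases i
      · simpa using a.1.1.1.1.2
      · simpa using a.1.1.1.2.2
      · simpa using a.1.1.2.2
    · -- nonzero
      intro h0
      apply a.2
      have h1 : a.1.1.1.1.1 = 0 := by simpa using congrFun h0 0
      have h2 : a.1.1.1.2.1 = 0 := by simpa using congrFun h0 1
      have h3 : a.1.1.2.1 = 0 := by simpa using congrFun h0 2
      exact Subtype.ext (Prod.ext (Prod.ext (Subtype.ext h1) (Subtype.ext h2)) (Subtype.ext h3))
    · simpa using a.1.2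
    · -- invFun ≠ z0
      intro hEq
      apply v.2.2.1
      have h1 : v.1 0 = 0 := congrArg (fun a : T => a.1.1.1.1) hEq
      have h2 : v.1 1 = 0 := congrArg (fun a : T => a.1.1.2.1) hEq
      have h3 : v.1 2 = 0 := congrArg (fun a : T => a.1.2.1) hEq
      funext i
      fin_cases i
      · exact h1
      · exact h2
      · exact h3
    · -- left inverse
      intro a
      apply Subtype.ext
      apply Subtype.ext
      rfl
    · -- right inverse
      rintro ⟨v, hvK, hv0, hveqn⟩
      apply Subtype.ext
      funext i
      fin_cases i <;> rfl
  rw [← Nat.card_congr e]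
  have hcompl : Nat.card {a : T // a = z0} + Nat.card {a : T // ¬ (a = z0)} = Nat.card T := by
    rw [Nat.card_eq_fintype_card, Nat.card_eq_fintype_card, Nat.card_eq_fintype_card,
      Fintype.card_subtype_compl]
    have h1 : Fintype.card {a : T // a = z0} ≤ Fintype.card T :=
      Fintype.card_le_of_injective (fun a => a.1) (fun a b h => Subtype.ext (by rw [a.2, b.2]))
    omega
  have h1 : Nat.card {a : T // a = z0} = 1 := by
    rw [Nat.card_eq_fintype_card, Fintype.card_subtype_eq]
  have hT2 : Nat.card T = (q^2-1)*(q^3+1) + 1 := cardT2 q hq2 hcard haddq (F := F)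
  rw [h1, hT2] at hcompl
  rw [Nat.add_comm ((q^2-1)*(q^3+1)) 1] at hcompl
  exact Nat.add_left_cancel hcompl

end

end Herm

open Herm in
/-- The Hermitian curve: over a finite field `F` with `q₀⁴` elements (`q₀` a prime
power), the number of points `[x : y : z]` of `ℙ²(F)` with
`x^{q₀+1} + y^{q₀+1} + z^{q₀+1} = 0` equals `q₀³ + 1`. -/
theorem hermitian_curve_count_quartic (q₀ : ℕ) (hq₀ : ∃ p n : ℕ, p.Prime ∧ 0 < n ∧ q₀ = p ^ n)
    (F : Type*) [Field F] [Fintype F] (hF : Fintype.card F = q₀ ^ 4) :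
    Nat.card {P : Projectivization F (Fin 3 → F) //
        (P.rep 0) ^ (q₀ + 1) + (P.rep 1) ^ (q₀ + 1) + (P.rep 2) ^ (q₀ + 1) = 0} =
      q₀ ^ 3 + 1 := by
  obtain ⟨p, n, hp, hn, rfl⟩ := hq₀
  set q := p ^ n with hq
  have hq2 : 2 ≤ q := Nat.one_lt_pow (by omega) hp.two_le
  haveI : CharP F (ringChar F) := ringChar.charP F
  obtain ⟨m, hmprime, hcardm⟩ := FiniteField.card F (ringChar F)
  have hrc : ringChar F = p := by
    have hdvd : ringChar F ∣ Fintype.card F := by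
      rw [hcardm]
      exact dvd_pow_self _ (by exact_mod_cast m.ne_zero)
    rw [hF] at hdvd
    have h1 : ringChar F ∣ p ^ n := hmprime.dvd_of_dvd_pow hdvd
    have h2 : ringChar F ∣ p := hmprime.dvd_of_dvd_pow h1
    exact (Nat.prime_dvd_prime_iff_eq hmprime hp).mp h2
  haveI : CharP F p := hrc ▸ ringChar.charP F
  haveI : Fact p.Prime := ⟨hp⟩
  have haddq : ∀ x y : F, (x+y)^q = x^q + y^q := fun x y => add_pow_char_pow x y p n
  have hcard : Fintype.card F = q^4 := hF
  clear_value q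
  have hfib := fibration q hq2 hcard haddq (F := F)
  have hSK := cardSK q hq2 hcard haddq (F := F)
  rw [hSK] at hfib
  have hpos : 0 < q^2 - 1 := by
    have h4 : 2^2 ≤ q^2 := Nat.pow_le_pow_left hq2 2
    exact Nat.sub_pos_of_lt (lt_of_lt_of_le (by norm_num) h4)
  have hgoal : Nat.card {P : Projectivization F (Fin 3 → F) //
        (P.rep 0)^(q+1) + (P.rep 1)^(q+1) + (P.rep 2)^(q+1) = 0} * (q^2-1)
      = (q^3+1) * (q^2-1) := by
    rw [← hfib, Nat.mul_comm]
  exact Nat.eq_of_mul_eq_mul_right hpos hgoal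
end

section
/- Let e ≥ 1 be an integer, q = 2^{2e+1}, q₀ = 2^e, and let i ∈ {1, 2, 3}. Let F be a finite field with q^i elements. Then the number of pairs (x, y) ∈ F × F satisfying y^q − y = x^{q₀}·(x^q − x) equals q². -/
open Finset Polynomial

/-- In a finite field of cardinality `q ^ i` (with `1 < q`, `0 < i`),
the number of elements fixed by `z ↦ z ^ q` is exactly `q`. -/
lemma suzuki_aux_card_fixed (F : Type*) [Field F] [Fintype F] {q i : ℕ}
    (hq : 1 < q) (hi : 0 < i) (hF : Fintype.card F = q ^ i) :
    Nat.card {z : F // z ^ q = z} = q := by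
  classical
  rw [Nat.card_eq_fintype_card, Fintype.card_subtype]
  have hq0 : q ≠ 0 := by omega
  -- upper bound via roots of X^q - X
  have hub : (univ.filter fun z : F => z ^ q = z).card ≤ q := by
    have hne : (X ^ q - X : F[X]) ≠ 0 := FiniteField.X_pow_card_sub_X_ne_zero F hq
    have hdeg : (X ^ q - X : F[X]).natDegree = q :=
      FiniteField.X_pow_card_sub_X_natDegree_eq F hq
    have hsub : (univ.filter fun z : F => z ^ q = z) ⊆ (X ^ q - X : F[X]).roots.toFinset := by
      intro z hz
      rw [mem_filter] at hz
      rw [Multiset.mem_toFinset, mem_roots hne]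
      simp [sub_eq_zero, hz.2]
    calc (univ.filter fun z : F => z ^ q = z).card
        ≤ (X ^ q - X : F[X]).roots.toFinset.card := Finset.card_le_card hsub
      _ ≤ Multiset.card (X ^ q - X : F[X]).roots := Multiset.toFinset_card_le _
      _ ≤ (X ^ q - X : F[X]).natDegree := Polynomial.card_roots' _
      _ = q := hdeg
  -- lower bound via a unit of order q - 1
  have hcardu : Fintype.card Fˣ = q ^ i - 1 := by
    rw [Fintype.card_units, hF]
  have hdvd : (q - 1) ∣ q ^ i - 1 := by
    simpa using Nat.sub_dvd_pow_sub_pow q 1 i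
  have hqi1 : q ^ i - 1 ≠ 0 := by
    have : 1 < q ^ i := Nat.one_lt_pow (by omega) hq
    omega
  obtain ⟨g, hg⟩ := IsCyclic.exists_generator (α := Fˣ)
  have hog : orderOf g = q ^ i - 1 := by
    rw [orderOf_eq_card_of_forall_mem_zpowers hg, Nat.card_eq_fintype_card, hcardu]
  set d : ℕ := (q ^ i - 1) / (q - 1) with hd
  have hddvd : d ∣ q ^ i - 1 := Nat.div_dvd_of_dvd hdvd
  set h : Fˣ := g ^ d with hh
  have hoh : orderOf h = q - 1 := by
    rw [hh, orderOf_pow, hog, Nat.gcd_eq_right hddvd, hd, Nat.div_div_self hdvd hqi1]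
  have hpow1 : h ^ (q - 1) = 1 := by rw [← hoh]; exact pow_orderOf_eq_one h
  set S : Finset Fˣ := (range (q - 1)).image (h ^ ·) with hS
  have hScard : S.card = q - 1 := by
    rw [hS, Finset.card_image_of_injOn, card_range]
    intro a ha b hb hab
    exact pow_injOn_Iio_orderOf (by simpa [hoh] using mem_range.mp ha)
      (by simpa [hoh] using mem_range.mp hb) hab
  set T : Finset F := S.image Units.val with hT
  have hTcard : T.card = q - 1 := by
    rw [hT, Finset.card_image_of_injective _ Units.val_injective, hScard]
  have h0T : (0 : F) ∉ T := by
    rw [hT]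
    simp only [mem_image, not_exists]
    rintro u ⟨hu, hu0⟩
    exact u.ne_zero hu0
  have hsub2 : insert (0 : F) T ⊆ univ.filter fun z : F => z ^ q = z := by
    intro z hz
    rw [mem_insert] at hz
    rw [mem_filter]
    refine ⟨mem_univ _, ?_⟩
    rcases hz with rfl | hz
    · exact zero_pow hq0
    · rw [hT, mem_image] at hz
      obtain ⟨u, hu, rfl⟩ := hz
      rw [hS, mem_image] at hu
      obtain ⟨k, _, rfl⟩ := hu
      have h1 : ((h ^ k : Fˣ) : F) ^ (q - 1) = 1 := by
        rw [← Units.val_pow_eq_pow_val, ← pow_mul, mul_comm, pow_mul, hpow1, one_pow,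
          Units.val_one]
      calc ((h ^ k : Fˣ) : F) ^ q = ((h ^ k : Fˣ) : F) ^ (q - 1) * ((h ^ k : Fˣ) : F) := by
            rw [← pow_succ]; congr 1; omega
        _ = ((h ^ k : Fˣ) : F) := by rw [h1, one_mul]
  have hlb : q ≤ (univ.filter fun z : F => z ^ q = z).card := by
    have hcc := Finset.card_le_card hsub2
    rw [Finset.card_insert_of_notMem h0T, hTcard] at hcc
    omega
  omega

/-- The Suzuki curve: for `q = 2^{2e+1}` and `q₀ = 2^e` with `e ≥ 1`, and `i ∈ {1,2,3}`,
the number of affine points `(x, y)` over the field with `q^i` elements satisfying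
`y^q - y = x^{q₀}(x^q - x)` equals `q²`. -/
theorem suzuki_curve_count (e : ℕ) (he : 1 ≤ e) (q q₀ : ℕ)
    (hq : q = 2 ^ (2 * e + 1)) (hq₀ : q₀ = 2 ^ e)
    (i : ℕ) (hi : i = 1 ∨ i = 2 ∨ i = 3)
    (F : Type*) [Field F] [Fintype F] (hF : Fintype.card F = q ^ i) :
    Nat.card {p : F × F // p.2 ^ q - p.2 = p.1 ^ q₀ * (p.1 ^ q - p.1)} = q ^ 2 := by
  classical
  have hq1 : 1 < q := by
    rw [hq]; exact Nat.one_lt_pow (by omega) (by norm_num)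
  have hi0 : 0 < i := by rcases hi with rfl | rfl | rfl <;> norm_num
  -- characteristic 2
  have htwo : (2 : F) = 0 := by
    have hcast : ((Fintype.card F : ℕ) : F) = 0 := FiniteField.cast_card_eq_zero F
    rw [hF, hq] at hcast
    have h' : (2 : F) ^ ((2 * e + 1) * i) = 0 := by
      push_cast at hcast
      rw [← pow_mul] at hcast
      exact_mod_cast hcast
    exact pow_eq_zero_iff (Nat.mul_ne_zero (by omega) (by omega)) |>.mp h'
  haveI : CharP F (ringChar F) := ringChar.charP F
  have hchar : ringChar F = 2 := by
    have hdvd : ringChar F ∣ 2 := ringChar.dvd (by exact_mod_cast htwo)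
    rcases (Nat.prime_two).eq_one_or_self_of_dvd _ hdvd with h1 | h1
    · exact absurd h1 (CharP.char_ne_one F (ringChar F))
    · exact h1
  haveI : CharP F 2 := by rw [← hchar]; exact ringChar.charP F
  haveI : Fact (Nat.Prime 2) := ⟨Nat.prime_two⟩
  -- char-2 helpers
  have hadd : ∀ a : F, a + a = 0 := fun a => by
    rw [← two_mul, htwo, zero_mul]
  have hsub : ∀ a b : F, a - b = a + b := fun a b => by
    rw [sub_eq_add_neg, CharTwo.neg_eq]
  have heqz : ∀ a b : F, a + b = 0 → a = b := fun a b hab => by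
    have h' := congrArg (· + b) hab
    simpa [add_assoc, hadd b] using h'
  -- Frobenius additivity for powers of 2
  have hfrob : ∀ (k : ℕ) (a b : F), (a + b) ^ 2 ^ k = a ^ 2 ^ k + b ^ 2 ^ k := fun k a b =>
    add_pow_char_pow a b 2 k
  have hfq : ∀ a b : F, (a + b) ^ q = a ^ q + b ^ q := fun a b => by
    rw [hq]; exact hfrob _ a b
  have hfq₀ : ∀ a b : F, (a + b) ^ q₀ = a ^ q₀ + b ^ q₀ := fun a b => by
    rw [hq₀]; exact hfrob _ a b
  have hswap : ∀ (z : F) (m n : ℕ), (z ^ m) ^ n = (z ^ n) ^ m := fun z m n => by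
    rw [← pow_mul, mul_comm, pow_mul]
  have hcard : ∀ z : F, z ^ q ^ i = z := fun z => by
    rw [← hF]; exact FiniteField.pow_card z
  have hq2q₀ : q = 2 * q₀ ^ 2 := by
    rw [hq, hq₀, ← pow_mul, pow_succ, mul_comm e 2, mul_comm]
  -- the key equivalence
  have key : ∀ p : F × F,
      (p.2 ^ q - p.2 = p.1 ^ q₀ * (p.1 ^ q - p.1)) ↔ (p.1 ^ q = p.1 ∧ p.2 ^ q = p.2) := by
    rintro ⟨x, y⟩
    simp only [hsub]
    constructor
    · intro h
      have hx : x ^ q = x := by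
        rcases hi with rfl | rfl | rfl
        · simpa using hcard x
        · -- i = 2
          have hx2 : (x ^ q) ^ q = x := by
            rw [← pow_mul, ← pow_two]; exact hcard x
          have hy2 : (y ^ q) ^ q = y := by
            rw [← pow_mul, ← pow_two]; exact hcard y
          have h1 : y + y ^ q = (x ^ q) ^ q₀ * (x + x ^ q) := by
            have h' := congrArg (· ^ q) h
            rw [hfq, mul_pow, hswap x q₀ q, hfq, hx2, hy2] at h'
            exact h'
          have hzero : (x ^ q + x) ^ (q₀ + 1) = 0 := by
            have expand : (x ^ q + x) ^ (q₀ + 1) = (x ^ q₀ + (x ^ q) ^ q₀) * (x ^ q + x) := by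
              rw [pow_succ, hfq₀]; ring
            rw [expand]
            linear_combination -h - h1 + (y + y ^ q) * htwo
          have hu : x ^ q + x = 0 := pow_eq_zero_iff (by omega) |>.mp hzero
          exact heqz _ _ hu
        · -- i = 3
          have hx3 : ((x ^ q) ^ q) ^ q = x := by
            rw [← pow_mul, ← pow_mul]
            have h3 : q * (q * q) = q ^ 3 := by ring
            rw [h3]; exact hcard x
          have hy3 : ((y ^ q) ^ q) ^ q = y := by
            rw [← pow_mul, ← pow_mul]
            have h3 : q * (q * q) = q ^ 3 := by ring
            rw [h3]; exact hcard y
          by_contra hxne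
          obtain ⟨a, ha⟩ : ∃ t : F, t = x ^ q + x := ⟨_, rfl⟩
          obtain ⟨b, hb⟩ : ∃ t : F, t = a ^ q := ⟨_, rfl⟩
          obtain ⟨c, hcc⟩ : ∃ t : F, t = b ^ q := ⟨_, rfl⟩
          rw [← ha] at h
          have ha0 : a ≠ 0 := by
            rw [ha]
            intro h0
            exact hxne (heqz _ _ h0)
          have hb0 : b ≠ 0 := by rw [hb]; exact pow_ne_zero _ ha0
          have hc0 : c ≠ 0 := by rw [hcc]; exact pow_ne_zero _ hb0
          have hbx : b = (x ^ q) ^ q + x ^ q := by rw [hb, ha, hfq]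
          have hcx : c = x + (x ^ q) ^ q := by
            rw [hcc, hbx, hfq, hx3, add_comm]
          have hcq : c ^ q = a := by
            rw [hcx, hfq, hx3]; exact ha.symm
          have habc : a + b + c = 0 := by
            rw [ha, hbx, hcx]
            linear_combination (x ^ q + x + (x ^ q) ^ q) * htwo
          have hcab : c = a + b := by
            linear_combination habc - (a + b) * htwo
          have h1 : (y ^ q) ^ q + y ^ q = (x ^ q) ^ q₀ * b := by
            have h' := congrArg (· ^ q) h
            rw [hfq, mul_pow, hswap x q₀ q, ← hb] at h'
            exact h'
          have h2 : y + (y ^ q) ^ q = ((x ^ q) ^ q) ^ q₀ * c := by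
            have h' := congrArg (· ^ q) h1
            rw [hfq, mul_pow, hswap (x ^ q) q₀ q, ← hcc, hy3] at h'
            exact h'
          have hstar : x ^ q₀ * a + (x ^ q) ^ q₀ * b + ((x ^ q) ^ q) ^ q₀ * c = 0 := by
            linear_combination -h - h1 - h2 + (y ^ q + y + (y ^ q) ^ q) * htwo
          have hcq₀ : c ^ q₀ = x ^ q₀ + ((x ^ q) ^ q) ^ q₀ := by rw [hcx, hfq₀]
          have hbq₀ : b ^ q₀ = ((x ^ q) ^ q) ^ q₀ + (x ^ q) ^ q₀ := by rw [hbx, hfq₀]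
          have hI : a * c ^ q₀ = b ^ (q₀ + 1) := by
            apply heqz
            linear_combination a * hcq₀ + b * hbq₀ + hstar - ((x ^ q) ^ q) ^ q₀ * hcab
          have hII : b * a ^ q₀ = c ^ (q₀ + 1) := by
            have h' := congrArg (· ^ q) hI
            rw [mul_pow, hswap c q₀ q, hcq, hswap b (q₀ + 1) q, ← hcc, ← hb] at h'
            exact h'
          have hIII : c * b ^ q₀ = a ^ (q₀ + 1) := by
            have h' := congrArg (· ^ q) hII
            rw [mul_pow, hswap a q₀ q, ← hb, hswap c (q₀ + 1) q, hcq, ← hcc] at h'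
            exact h'
          have hIV : c ^ (2 * q₀ + 1) = b * a ^ (2 * q₀) := by
            have h' := congrArg (· ^ (2 * q₀)) hIII
            rw [mul_pow, ← pow_mul, ← pow_mul] at h'
            have e1 : q₀ * (2 * q₀) = q := by rw [hq2q₀]; ring
            have e2 : (q₀ + 1) * (2 * q₀) = q + 2 * q₀ := by rw [hq2q₀]; ring
            rw [e1, e2, pow_add, ← hb, ← hcc, ← pow_succ] at h'
            exact h'
          have key2 : b * a ^ (2 * q₀) * b = b * a ^ (2 * q₀) * c := by
            have h' := congrArg (· ^ 2) hII
            rw [mul_pow, ← pow_mul, ← pow_mul] at h'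
            have e3 : (q₀ + 1) * 2 = 2 * q₀ + 1 + 1 := by ring
            have e4 : q₀ * 2 = 2 * q₀ := by ring
            rw [e3, e4, pow_succ c (2 * q₀ + 1), hIV] at h'
            linear_combination h'
          have hbc : b = c :=
            mul_left_cancel₀ (mul_ne_zero hb0 (pow_ne_zero _ ha0)) key2
          have hab : a = b := by
            have h' : a * b ^ q₀ = b * b ^ q₀ := by
              calc a * b ^ q₀ = a * c ^ q₀ := by rw [hbc]
                _ = b ^ (q₀ + 1) := hI
                _ = b * b ^ q₀ := by rw [pow_succ]; ring
            exact mul_right_cancel₀ (pow_ne_zero _ hb0) h'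
          apply ha0
          have hfin : a + a + a = 0 := by
            have h' := habc
            rw [← hbc, ← hab] at h'
            exact h'
          linear_combination hfin - a * htwo
      have h0 : y ^ q + y = 0 := by
        rw [h, hx, hadd, mul_zero]
      exact ⟨hx, heqz _ _ h0⟩
    · rintro ⟨hx, hy⟩
      rw [hx, hy, hadd, hadd, mul_zero]
  -- counting
  rw [Nat.card_congr ((Equiv.subtypeEquivRight key).trans
    (Equiv.subtypeProdEquivProd (p := fun x : F => x ^ q = x) (q := fun y : F => y ^ q = y))),
    Nat.card_prod, suzuki_aux_card_fixed F hq1 hi0 hF]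
  exact (sq q).symm
end

section
/- Let q be an odd prime power and let F be a finite field with q² elements. Then for all y, z ∈ F, the equation y^q − y = z^{q+1} holds if and only if z = 0 and y^q = y. In particular, the number of pairs (y, z) ∈ F × F with y^q − y = z^{q+1} equals q. -/
open Polynomial in
lemma drinfeld_aux_root_bound {F : Type*} [Field F] [Fintype F] (f : Polynomial F)
    (hf : f ≠ 0) (s : Set F) (h : ∀ x ∈ s, Polynomial.eval x f = 0) :
    Nat.card s ≤ f.natDegree := by
  classical
  have hsub : s ⊆ (f.roots.toFinset : Set F) := by
    intro x hx
    simp only [Finset.coe_sort_coe, Multiset.mem_toFinset, Finset.mem_coe]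
    rw [Polynomial.mem_roots hf]
    exact h x hx
  calc Nat.card s = s.ncard := Nat.card_coe_set_eq s
    _ ≤ (f.roots.toFinset : Set F).ncard := Set.ncard_le_ncard hsub (Set.toFinite _)
    _ = f.roots.toFinset.card := Set.ncard_coe_finset _
    _ ≤ Multiset.card f.roots := Multiset.toFinset_card_le _
    _ ≤ f.natDegree := Polynomial.card_roots' f

/-- The Drinfeld curve `y^q - y = z^{q+1}` for odd prime power `q`: over the field `F`
with `q²` elements, the equation holds iff `z = 0` and `y ∈ 𝔽_q` (i.e. `y^q = y`);
in particular the number of affine solutions `(y, z) ∈ F × F` equals `q`. -/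
theorem drinfeld_curve_count (q : ℕ) (hq : ∃ p n : ℕ, p.Prime ∧ 0 < n ∧ q = p ^ n)
    (hodd : Odd q) (F : Type*) [Field F] [Fintype F] (hF : Fintype.card F = q ^ 2) :
    (∀ y z : F, y ^ q - y = z ^ (q + 1) ↔ z = 0 ∧ y ^ q = y) ∧
    Nat.card {p : F × F // p.1 ^ q - p.1 = p.2 ^ (q + 1)} = q := by
  classical
  obtain ⟨p, n, hp, hn, hqe⟩ := hq
  haveI : Fact p.Prime := ⟨hp⟩
  have hq1 : 1 < q := by
    rw [hqe]; exact Nat.one_lt_pow hn.ne' hp.one_lt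
  have hq2 : Fintype.card F = p ^ (2 * n) := by
    rw [hF, hqe, ← pow_mul, mul_comm n 2]
  have hchar : CharP F p := by
    have hrc := CharP.char_is_prime F (ringChar F)
    have hdvd : ringChar F ∣ p ^ (2 * n) := by
      rw [← hq2]
      exact (CharP.cast_eq_zero_iff F (ringChar F) _).mp (FiniteField.cast_card_eq_zero F)
    have : ringChar F = p :=
      (Nat.prime_dvd_prime_iff_eq hrc hp).mp (hrc.dvd_of_dvd_pow hdvd)
    exact this ▸ ringChar.charP F
  have hp2 : p ≠ 2 := by
    intro h
    rw [hqe, h] at hodd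
    exact (Nat.not_odd_iff_even.mpr (Nat.even_pow.mpr ⟨even_two, hn.ne'⟩)) hodd
  have h2 : (2 : F) ≠ 0 := by
    have : ((2 : ℕ) : F) ≠ 0 := by
      rw [Ne, CharP.cast_eq_zero_iff F p]
      intro hdvd
      exact hp2 ((Nat.prime_dvd_prime_iff_eq hp Nat.prime_two).mp hdvd)
    simpa using this
  have frob_sub : ∀ a b : F, (a - b) ^ q = a ^ q - b ^ q := by
    intro a b; rw [hqe]; exact sub_pow_char_pow a b n
  have frob_add : ∀ a b : F, (a + b) ^ q = a ^ q + b ^ q := by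
    intro a b; rw [hqe]; exact add_pow_char_pow a b p n
  have pow_card : ∀ a : F, a ^ (q * q) = a := by
    intro a
    have := FiniteField.pow_card a
    rwa [hF, sq] at this
  have frobneg : ∀ y : F, (y ^ q - y) ^ q = -(y ^ q - y) := by
    intro y
    rw [frob_sub, ← pow_mul, pow_card, neg_sub]
  have key : ∀ y z : F, y ^ q - y = z ^ (q + 1) ↔ z = 0 ∧ y ^ q = y := by
    intro y z
    constructor
    · intro h
      have ht2 : (z ^ (q + 1)) ^ q = z ^ (q + 1) := by
        rw [← pow_mul, show (q + 1) * q = q * q + q from by ring, pow_add, pow_card,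
          pow_succ, mul_comm]
      have hneg : z ^ (q + 1) = -(z ^ (q + 1)) := by
        calc z ^ (q + 1) = (z ^ (q + 1)) ^ q := ht2.symm
          _ = (y ^ q - y) ^ q := by rw [h]
          _ = -(y ^ q - y) := frobneg y
          _ = -(z ^ (q + 1)) := by rw [h]
      have hz0 : z ^ (q + 1) = 0 := by
        have h2t : 2 * z ^ (q + 1) = 0 := by linear_combination hneg
        rcases mul_eq_zero.mp h2t with h' | h'
        · exact absurd h' h2
        · exact h'
      have z0 : z = 0 := pow_eq_zero_iff (n := q + 1) (by omega) |>.mp hz0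
      refine ⟨z0, ?_⟩
      rw [z0, zero_pow (by omega : q + 1 ≠ 0)] at h
      exact sub_eq_zero.mp h
    · rintro ⟨rfl, hy⟩
      rw [hy, sub_self, zero_pow (by omega : q + 1 ≠ 0)]
  refine ⟨key, ?_⟩
  have e : {p : F × F // p.1 ^ q - p.1 = p.2 ^ (q + 1)} ≃ {y : F // y ^ q = y} :=
    { toFun := fun x => ⟨x.1.1, ((key _ _).mp x.2).2⟩
      invFun := fun y => ⟨(y.1, 0), (key _ _).mpr ⟨rfl, y.2⟩⟩
      left_inv := fun x => by
        apply Subtype.ext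
        exact Prod.ext rfl (((key _ _).mp x.2).1).symm
      right_inv := fun y => rfl }
  rw [Nat.card_congr e]
  -- the additive homomorphism x ↦ x^q - x
  set φ : F →+ F :=
    { toFun := fun x => x ^ q - x
      map_zero' := by simp [zero_pow (by omega : q ≠ 0)]
      map_add' := by
        intro a b
        show (a + b) ^ q - (a + b) = (a ^ q - a) + (b ^ q - b)
        rw [frob_add]; ring } with hφ
  have hker : Nat.card {y : F // y ^ q = y} = Nat.card φ.ker := by
    apply Nat.card_congr
    apply Equiv.subtypeEquivRight
    intro x
    simp [hφ, AddMonoidHom.mem_ker, sub_eq_zero, eq_comm]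
  rw [hker]
  have hcard : Nat.card F = Nat.card (F ⧸ φ.ker) * Nat.card φ.ker :=
    AddSubgroup.card_eq_card_quotient_mul_card_addSubgroup φ.ker
  have hquot : Nat.card (F ⧸ φ.ker) = Nat.card φ.range :=
    Nat.card_congr (QuotientAddGroup.quotientKerEquivRange φ).toEquiv
  -- bounds via polynomials
  have hXq : (Polynomial.X ^ q - Polynomial.X : Polynomial F).natDegree = q :=
    FiniteField.X_pow_card_sub_X_natDegree_eq F hq1
  have hXq' : (Polynomial.X ^ q + Polynomial.X : Polynomial F).natDegree = q := by
    rw [Polynomial.natDegree_add_eq_left_of_natDegree_lt, Polynomial.natDegree_X_pow]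
    rw [Polynomial.natDegree_X_pow, Polynomial.natDegree_X]
    omega
  have hker_le : Nat.card φ.ker ≤ q := by
    have := drinfeld_aux_root_bound (Polynomial.X ^ q - Polynomial.X : Polynomial F)
      (by intro h; rw [h] at hXq; simp at hXq; omega)
      (φ.ker : Set F) ?_
    · rwa [hXq] at this
    · intro x hx
      have : x ^ q - x = 0 := hx
      simp [this]
  have hrange_le : Nat.card φ.range ≤ q := by
    have := drinfeld_aux_root_bound (Polynomial.X ^ q + Polynomial.X : Polynomial F)
      (by intro h; rw [h] at hXq'; simp at hXq'; omega)
      (φ.range : Set F) ?_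
    · rwa [hXq'] at this
    · rintro t ⟨x, rfl⟩
      have : (x ^ q - x) ^ q = -(x ^ q - x) := frobneg x
      simp only [Polynomial.eval_add, Polynomial.eval_pow, Polynomial.eval_X]
      show (x ^ q - x) ^ q + (x ^ q - x) = 0
      rw [this]; ring
  have hF' : Nat.card F = q * q := by
    rw [Nat.card_eq_fintype_card, hF, sq]
  rw [hquot, hF'] at hcard
  -- q*q = range * ker, with range ≤ q and ker ≤ q forces ker = q
  have hq0 : 0 < q := by omega
  refine le_antisymm hker_le ?_
  by_contra hlt
  push_neg at hlt
  have : q * q < q * q := by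
    calc q * q = Nat.card φ.range * Nat.card φ.ker := hcard
      _ ≤ q * Nat.card φ.ker := Nat.mul_le_mul_right _ hrange_le
      _ < q * q := (Nat.mul_lt_mul_left hq0).mpr hlt
  omega
end

section
/- Let K be a finite field of odd cardinality q, let n ∈ K be an element that is not a square in K, and let L be a field extension of K of degree 3. Then: (i) the polynomial X^{q³} − X + n ∈ K[X] is separable; and (ii) there is no pair (x, y) ∈ L × L with y² = x^{q³} − x + n. -/
open Polynomial in
/-- Howe's hyperelliptic DS-curve for `𝔽_{q³}/𝔽_q`: for a finite field `K` of odd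
cardinality `q`, a nonsquare `n ∈ K`, and a degree-3 extension `L/K`, the polynomial
`X^{q³} - X + n` is separable, and the curve `y² = x^{q³} - x + n` has no affine
points over `L`. -/
theorem hyperelliptic_DS_cubic_extension (K : Type*) [Field K] [Fintype K]
    (q : ℕ) (hq : Fintype.card K = q) (hodd : Odd q)
    (n : K) (hn : ¬ IsSquare n)
    (L : Type*) [Field L] [Algebra K L] (hL : Module.finrank K L = 3) :
    (X ^ q ^ 3 - X + C n : K[X]).Separable ∧
    ¬ ∃ x y : L, y ^ 2 = x ^ q ^ 3 - x + algebraMap K L n := by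
  obtain ⟨k, hk⟩ := hodd
  have hq1 : 1 < q := hq ▸ Fintype.one_lt_card
  have hcastq : (q : K) = 0 := by rw [← hq]; exact FiniteField.cast_card_eq_zero K
  constructor
  · -- separability
    have hder : derivative (X ^ q ^ 3 - X + C n : K[X]) = -1 := by
      simp only [derivative_add, derivative_sub, derivative_X_pow, derivative_X, derivative_C,
        add_zero]
      rw [Nat.cast_pow, hcastq]
      simp
    rw [Polynomial.Separable, hder]
    exact ⟨0, -1, by ring⟩
  · -- no affine points
    rintro ⟨x, y, hxy⟩
    have hfd : FiniteDimensional K L := Module.finite_of_finrank_pos (by omega)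
    have : Finite L := Module.finite_of_finite K
    have : Fintype L := Fintype.ofFinite L
    have hcardL : Fintype.card L = q ^ 3 := by
      rw [Module.card_eq_pow_finrank (K := K) (V := L), hq, hL]
    have hx : x ^ q ^ 3 = x := by rw [← hcardL]; exact FiniteField.pow_card x
    rw [hx] at hxy
    have hsq : IsSquare (algebraMap K L n) := ⟨y, by rw [← sq, hxy]; ring⟩
    have hcharK : ringChar K ≠ 2 := by
      intro h
      have := FiniteField.even_card_iff_char_two.mp h
      omega
    have hq3odd : q ^ 3 % 2 = 1 := by
      have : q ^ 3 = 2 * (4 * k ^ 3 + 6 * k ^ 2 + 3 * k) + 1 := by subst hk; ring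
      omega
    have hcharL : ringChar L ≠ 2 := by
      intro h
      have := FiniteField.even_card_iff_char_two.mp h
      rw [hcardL] at this
      omega
    have hn0 : n ≠ 0 := fun h => hn (h ▸ ⟨0, by simp⟩)
    -- n ^ k = -1
    have hnk : n ^ k = -1 := by
      have h1 : n ^ (q - 1) = 1 := by
        rw [← hq]; exact FiniteField.pow_card_sub_one_eq_one n hn0
      have h2 : n ^ k * n ^ k = 1 := by
        rw [← pow_add, show k + k = q - 1 by omega]; exact h1
      rcases mul_self_eq_one_iff.mp h2 with h | h
      · exact absurd ((FiniteField.isSquare_iff hcharK hn0).mpr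
          (by rw [hq, show q / 2 = k by omega]; exact h)) hn
      · exact h
    have ha0 : algebraMap K L n ≠ 0 := fun h =>
      hn0 ((algebraMap K L).injective (by simpa using h))
    have h1 := (FiniteField.isSquare_iff hcharL ha0).mp hsq
    have h3 : q ^ 3 = 2 * (k * (q ^ 2 + q + 1)) + 1 := by subst hk; ring
    rw [hcardL, h3, show (2 * (k * (q ^ 2 + q + 1)) + 1) / 2 = k * (q ^ 2 + q + 1) by omega]
      at h1
    have hoddexp : Odd (q ^ 2 + q + 1) := by
      have : q ^ 2 + q + 1 = 2 * (2 * k ^ 2 + 3 * k + 1) + 1 := by subst hk; ring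
      exact ⟨2 * k ^ 2 + 3 * k + 1, by omega⟩
    rw [pow_mul, ← map_pow, hnk, map_neg, map_one, hoddexp.neg_one_pow] at h1
    exact hcharL (neg_one_eq_one_iff.mp h1)
end
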